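/- arXiv:1011.4698 — 3 statements merged into one kernel-verified Lean document; each statement's English description precedes it below -/
import Mathlib

section
/- J : I = (xⁿ, xy, y³, z₁, …, z_r); J : I² = (x^{n−1}, xy, y², z₁, …, z_r); for every ℓ with 3 ≤ ℓ ≤ n one has J : I^ℓ = (x^{n+1−ℓ}, y, z₁, …, z_r); and J : I^{n+1} = R. -/
/-!
Apart from `J`, all ideals involved are monomial ideals, and a power series lies in the ideal
generated by finitely many monomials iff every exponent in its support is divisible by one of them.
The ideal `J = (y³ + xⁿ, xy, z)` contains every monomial divisible by `xy` or by some `zₖ`, and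
also `xⁿ⁺¹ = x (y³ + xⁿ) - y² · xy` and `y⁴`. Hence membership in `J` only depends on the
coefficients of the pure powers: `f ∈ J` iff the coefficients of `xᵃ` (`a < n`) and `yᵇ` (`b < 3`)
vanish and those of `xⁿ` and `y³` agree.

Since the `zₖ` lie in `J`, `f ∈ J : I^ℓ` iff `f xᵃ yᵇ ∈ J` whenever `a + b = ℓ`. For `a, b ≥ 1`
this always holds, and for `f x^ℓ`, `f y^ℓ` the criterion says exactly that the coefficients of
`xᶜ` with `c + ℓ ≤ n` and of `yᵉ` with `e + ℓ ≤ 3` vanish. Each of these conditions describes the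
monomial ideal on the right-hand side.
-/

theorem Fin.range_succ_succ (r : ℕ) :
    Set.range (fun t : Fin r => t.succ.succ) = ({0, 1} : Set (Fin (r + 2)))ᶜ := by
  ext s
  simp only [Set.mem_range, Set.mem_compl_iff, Set.mem_insert_iff, Set.mem_singleton_iff, not_or]
  refine ⟨by rintro ⟨t, rfl⟩; exact ⟨Fin.succ_ne_zero _, Fin.succ_succ_ne_one _⟩, ?_⟩
  rintro ⟨h0, h1⟩
  cases s using Fin.cases with
  | zero => exact absurd rfl h0
  | succ s =>
    cases s using Fin.cases with
    | zero => exact absurd rfl h1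
    | succ t => exact ⟨t, rfl⟩

namespace Finsupp

variable {σ : Type*} {i j : σ}

theorem single_add_single_le_iff (hij : i ≠ j) {a b : ℕ} {d : σ →₀ ℕ} :
    single i a + single j b ≤ d ↔ a ≤ d i ∧ b ≤ d j := by
  refine ⟨fun h => ⟨by simpa [hij.symm] using h i, by simpa [hij] using h j⟩, ?_⟩
  rintro ⟨ha, hb⟩ s
  by_cases hsi : s = i
  · subst hsi; simpa [hij] using ha
  · by_cases hsj : s = j
    · subst hsj; simpa [hsi] using hb
    · simp [Ne.symm hsi, Ne.symm hsj]

theorem eq_single_or_eq_single_of_apply_eq_zero {d : σ →₀ ℕ}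
    (hij : d i = 0 ∨ d j = 0) (hd : ∀ s ∉ ({i, j} : Set σ), d s = 0) :
    d = single i (d i) ∨ d = single j (d j) := by
  rcases hij with h | h
  · refine Or.inr (support_subset_singleton.1 fun s hs => ?_)
    by_contra hsj
    by_cases hsi : s = i
    · simp_all
    · exact mem_support_iff.1 hs (hd s (by simp_all))
  · refine Or.inl (support_subset_singleton.1 fun s hs => ?_)
    by_contra hsi
    by_cases hsj : s = j
    · simp_all
    · exact mem_support_iff.1 hs (hd s (by simp_all))

end Finsupp

namespace Ideal

variable {A : Type*} [CommRing A]

theorem pow_span_pair_sup_le (x y : A) (K : Ideal A) (ℓ : ℕ) :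
    (span {x, y} ⊔ K) ^ ℓ ≤
      span ((fun ab : ℕ × ℕ => x ^ ab.1 * y ^ ab.2) '' {ab | ab.1 + ab.2 = ℓ}) ⊔ K := by
  induction ℓ with
  | zero =>
    rw [pow_zero, one_eq_top, top_le_iff, eq_top_iff_one]
    exact mem_sup_left (subset_span ⟨(0, 0), rfl, by simp⟩)
  | succ ℓ ih =>
    set M := span ((fun ab : ℕ × ℕ => x ^ ab.1 * y ^ ab.2) '' {ab | ab.1 + ab.2 = ℓ})
    set S := span {x, y}
    have hK : M * K ⊔ (K * S ⊔ K * K) ≤ K :=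
      sup_le mul_le_right (sup_le mul_le_left mul_le_left)
    calc (S ⊔ K) ^ (ℓ + 1) ≤ (M ⊔ K) * (S ⊔ K) := by rw [pow_succ]; exact mul_mono_left ih
      _ ≤ M * S ⊔ K := by
        rw [sup_mul, mul_sup, mul_sup, sup_assoc]
        exact sup_le_sup_left hK _
      _ ≤ _ := by
        refine sup_le_sup_right ?_ K
        rw [span_mul_span']
        refine span_mono ?_
        rintro _ ⟨_, ⟨⟨a, b⟩, hab, rfl⟩, _, hxy, rfl⟩
        rcases hxy with rfl | rfl
        · exact ⟨(a + 1, b), by simp_all; omega, by simp only; ring⟩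
        · exact ⟨(a, b + 1), by simp_all; omega, by simp only; ring⟩

theorem mem_colon_pow_span_pair_sup_iff {J K : Ideal A} (hKJ : K ≤ J) {x y f : A} {ℓ : ℕ} :
    f ∈ J.colon (((span {x, y} ⊔ K) ^ ℓ : Ideal A) : Set A) ↔
      ∀ a b, a + b = ℓ → f * (x ^ a * y ^ b) ∈ J := by
  constructor
  · intro h a b hab
    refine Submodule.mem_colon.1 h _ ?_
    rw [← hab, pow_add]
    exact mul_mem_mul (pow_mem_pow (mem_sup_left (subset_span (by simp))) a)
      (pow_mem_pow (mem_sup_left (subset_span (by simp))) b)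
  · intro h
    refine Submodule.colon_mono le_rfl (pow_span_pair_sup_le x y K ℓ) ?_
    rw [← span_eq K, ← span_union, colon_span, Submodule.mem_colon]
    rintro _ (⟨⟨a, b⟩, hab, rfl⟩ | hk)
    · exact h a b hab
    · exact mul_mem_left _ f (hKJ hk)

end Ideal

open MvPowerSeries Finsupp

namespace MvPowerSeries

variable {σ R : Type*} [CommRing R]

theorem monomial_one_dvd_iff {m : σ →₀ ℕ} {f : MvPowerSeries σ R} :
    monomial m (1 : R) ∣ f ↔ ∀ d, coeff d f ≠ 0 → m ≤ d := by
  classical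
  constructor
  · rintro ⟨g, rfl⟩ d hd
    rw [coeff_monomial_mul] at hd
    by_contra h
    exact hd (if_neg h)
  · intro h
    obtain ⟨g, hg⟩ : ∃ g : MvPowerSeries σ R, ∀ e, coeff e g = coeff (e + m) f :=
      ⟨fun e => coeff (e + m) f, fun e => rfl⟩
    refine ⟨g, ext fun d => ?_⟩
    rw [coeff_monomial_mul, one_mul]
    split_ifs with hmd
    · rw [hg, tsub_add_cancel_of_le hmd]
    · exact not_not.1 (mt (h d) hmd)

theorem mem_ideal_span_monomial_image {s : Set (σ →₀ ℕ)} (hs : s.Finite)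
    {f : MvPowerSeries σ R} :
    f ∈ Ideal.span ((monomial · (1 : R)) '' s) ↔ ∀ d, coeff d f ≠ 0 → ∃ m ∈ s, m ≤ d := by
  classical
  induction s, hs using Set.Finite.induction_on generalizing f with
  | empty =>
    simp only [Set.image_empty, Ideal.span_empty, Ideal.mem_bot, Set.mem_empty_iff_false,
      false_and, exists_false, imp_false, not_not]
    exact ⟨fun h d => h ▸ map_zero _, fun h => ext h⟩
  | @insert a s _ _ ih =>
    rw [Set.image_insert_eq, Ideal.span_insert, Submodule.mem_sup]
    constructor
    · rintro ⟨y, hy, z, hz, rfl⟩ d hd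
      by_cases hyd : coeff d y = 0
      · obtain ⟨m, hm, hmd⟩ := ih.1 hz d (by simpa [hyd] using hd)
        exact ⟨m, Set.mem_insert_of_mem a hm, hmd⟩
      · exact ⟨a, Set.mem_insert a s,
          monomial_one_dvd_iff.1 (Ideal.mem_span_singleton.1 hy) d hyd⟩
    · intro h
      obtain ⟨y, hy⟩ : ∃ y : MvPowerSeries σ R, ∀ d, coeff d y = if a ≤ d then coeff d f else 0 :=
        ⟨fun d => if a ≤ d then coeff d f else 0, fun d => rfl⟩
      refine ⟨y, Ideal.mem_span_singleton.2 (monomial_one_dvd_iff.2 fun d hd => ?_),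
        f - y, ih.2 fun d hd => ?_, add_sub_cancel y f⟩
      · by_contra had
        simp [hy, had] at hd
      · by_cases had : a ≤ d
        · simp [hy, had] at hd
        · obtain ⟨m, hm, hmd⟩ := h d (by simpa [hy, had] using hd)
          exact ⟨m, (Set.mem_insert_iff.1 hm).resolve_left (by rintro rfl; exact had hmd), hmd⟩

variable {i j : σ}

theorem mem_span_X_pow_X_mul_X_X_pow_iff [Finite σ] (hij : i ≠ j) {A B : ℕ} (hA : 1 ≤ A)
    (hB : 1 ≤ B) {f : MvPowerSeries σ R} :
    f ∈ Ideal.span ({X i ^ A, X i * X j, X j ^ B} ∪ X '' {i, j}ᶜ) ↔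
      (∀ a < A, coeff (single i a) f = 0) ∧ (∀ b < B, coeff (single j b) f = 0) := by
  have hset : ({X i ^ A, X i * X j, X j ^ B} ∪ X '' {i, j}ᶜ : Set (MvPowerSeries σ R)) =
      (monomial · 1) '' ({single i A, single i 1 + single j 1, single j B} ∪
        (single · 1) '' {i, j}ᶜ) := by
    rw [X_pow_eq, X_pow_eq, X_def i, X_def j, monomial_mul_monomial, one_mul,
      show (X : σ → MvPowerSeries σ R) = fun s => monomial (single s 1) 1 from funext X_def]
    simp only [Set.image_union, Set.image_insert_eq, Set.image_singleton, Set.image_image]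
  rw [hset, mem_ideal_span_monomial_image (Set.toFinite _)]
  constructor
  · intro h
    refine ⟨fun a ha => ?_, fun b hb => ?_⟩ <;> by_contra hne
    · obtain ⟨m, hm, hmd⟩ := h _ hne
      rcases hm with (rfl | rfl | rfl) | ⟨s, hs, rfl⟩
      all_goals simp_all [single_le_iff, single_add_single_le_iff hij] <;> omega
    · obtain ⟨m, hm, hmd⟩ := h _ hne
      rcases hm with (rfl | rfl | rfl) | ⟨s, hs, rfl⟩
      all_goals simp_all [single_le_iff, single_add_single_le_iff hij] <;> omega
  · rintro ⟨hx, hy⟩ d hd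
    by_cases hs : ∃ s ∉ ({i, j} : Set σ), 1 ≤ d s
    · obtain ⟨s, hs, hds⟩ := hs
      exact ⟨single s 1, Or.inr ⟨s, hs, rfl⟩, single_le_iff.2 hds⟩
    by_cases hxy : 1 ≤ d i ∧ 1 ≤ d j
    · exact ⟨single i 1 + single j 1, by simp, (single_add_single_le_iff hij).2 hxy⟩
    push Not at hs hxy
    rcases eq_single_or_eq_single_of_apply_eq_zero (by omega)
      fun s hs' => Nat.lt_one_iff.1 (hs s hs') with h | h
    · refine ⟨single i A, by simp, single_le_iff.2 ?_⟩
      by_contra hlt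
      exact hd (h ▸ hx _ (by omega))
    · refine ⟨single j B, by simp, single_le_iff.2 ?_⟩
      by_contra hlt
      exact hd (h ▸ hy _ (by omega))

theorem mem_span_X_pow_X_iff [Finite σ] (hij : i ≠ j) {A : ℕ} (hA : 1 ≤ A)
    {f : MvPowerSeries σ R} :
    f ∈ Ideal.span ({X i ^ A, X j} ∪ X '' {i, j}ᶜ) ↔ ∀ a < A, coeff (single i a) f = 0 := by
  have hspan : Ideal.span ({X i ^ A, X i * X j, X j ^ 1} ∪ X '' {i, j}ᶜ) =
      Ideal.span ({X i ^ A, X j} ∪ X '' {i, j}ᶜ : Set (MvPowerSeries σ R)) := by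
    rw [pow_one, Set.insert_comm, Set.insert_union, Ideal.span_insert, sup_eq_right,
      Ideal.span_singleton_le_iff_mem]
    exact Ideal.mul_mem_left _ _ (Ideal.subset_span (by simp))
  rw [← hspan, mem_span_X_pow_X_mul_X_X_pow_iff hij hA le_rfl]
  refine ⟨And.left, fun h => ⟨h, fun b hb => ?_⟩⟩
  rw [Nat.lt_one_iff.1 hb, single_zero, ← single_zero i]
  exact h 0 hA

theorem coeff_single_mul_X_pow (f : MvPowerSeries σ R) (a ℓ : ℕ) :
    coeff (single i a) (f * X i ^ ℓ) = if ℓ ≤ a then coeff (single i (a - ℓ)) f else 0 := by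
  simp only [X_pow_eq, coeff_mul_monomial, mul_one, single_le_iff, single_eq_same, single_tsub]

theorem coeff_single_mul_X_pow_of_ne (hij : i ≠ j) (f : MvPowerSeries σ R) (a : ℕ) {ℓ : ℕ}
    (hℓ : ℓ ≠ 0) : coeff (single i a) (f * X j ^ ℓ) = 0 := by
  rw [X_pow_eq, coeff_mul_monomial, if_neg]
  simp [single_le_iff, hij, hℓ]

variable (i j) in
/-- The ideal `(y ^ p + x ^ q, x * y, z₁, …)` with `x = X i`, `y = X j` and `zₖ` the remaining
variables. -/
noncomputable def cuspIdeal (p q : ℕ) : Ideal (MvPowerSeries σ R) :=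
  Ideal.span ({X j ^ p + X i ^ q, X i * X j} ∪ X '' {i, j}ᶜ)

theorem X_pow_add_X_pow_mem_cuspIdeal (p q : ℕ) :
    (X j : MvPowerSeries σ R) ^ p + X i ^ q ∈ cuspIdeal i j p q :=
  Ideal.subset_span (by simp)

theorem X_mul_X_mem_cuspIdeal (p q : ℕ) :
    (X i : MvPowerSeries σ R) * X j ∈ cuspIdeal i j p q :=
  Ideal.subset_span (by simp)

theorem span_X_pow_succ_le_cuspIdeal {p q : ℕ} (hp : p ≠ 0) (hq : q ≠ 0) :
    Ideal.span ({X i ^ (q + 1), X i * X j, X j ^ (p + 1)} ∪ X '' {i, j}ᶜ) ≤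
      (cuspIdeal i j p q : Ideal (MvPowerSeries σ R)) := by
  have hcusp := X_pow_add_X_pow_mem_cuspIdeal (R := R) (i := i) (j := j) p q
  have hxy := X_mul_X_mem_cuspIdeal (R := R) (i := i) (j := j) p q
  obtain ⟨p, rfl⟩ := Nat.exists_eq_succ_of_ne_zero hp
  obtain ⟨q, rfl⟩ := Nat.exists_eq_succ_of_ne_zero hq
  refine Ideal.span_le.2 fun g hg => ?_
  rcases hg with (rfl | rfl | rfl) | hg
  · have : (X i : MvPowerSeries σ R) ^ (q + 1 + 1) =
        X i * (X j ^ (p + 1) + X i ^ (q + 1)) - X j ^ p * (X i * X j) := by ring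
    rw [SetLike.mem_coe, this]
    exact sub_mem (Ideal.mul_mem_left _ _ hcusp) (Ideal.mul_mem_left _ _ hxy)
  · exact hxy
  · have : (X j : MvPowerSeries σ R) ^ (p + 1 + 1) =
        X j * (X j ^ (p + 1) + X i ^ (q + 1)) - X i ^ q * (X i * X j) := by ring
    rw [SetLike.mem_coe, this]
    exact sub_mem (Ideal.mul_mem_left _ _ hcusp) (Ideal.mul_mem_left _ _ hxy)
  · exact Ideal.subset_span (Or.inr hg)

theorem mem_cuspIdeal_iff [Finite σ] (hij : i ≠ j) {p q : ℕ} (hp : p ≠ 0) (hq : q ≠ 0)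
    {f : MvPowerSeries σ R} :
    f ∈ cuspIdeal i j p q ↔ (∀ a < q, coeff (single i a) f = 0) ∧
      (∀ b < p, coeff (single j b) f = 0) ∧ coeff (single i q) f = coeff (single j p) f := by
  have hN := span_X_pow_succ_le_cuspIdeal (R := R) (i := i) (j := j) hp hq
  have hN_iff := fun g : MvPowerSeries σ R =>
    mem_span_X_pow_X_mul_X_X_pow_iff (f := g) hij (Nat.le_add_left 1 q) (Nat.le_add_left 1 p)
  constructor
  · intro hf
    rw [cuspIdeal, Set.insert_union, Ideal.span_insert, Submodule.mem_sup] at hf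
    obtain ⟨_, hg, m, hm, rfl⟩ := hf
    obtain ⟨g, rfl⟩ := Ideal.mem_span_singleton'.1 hg
    obtain ⟨hmx, hmy⟩ := (hN_iff _).1 (Ideal.span_mono (by intro; simp; tauto) hm)
    simp only [map_add, mul_add, coeff_single_mul_X_pow, coeff_single_mul_X_pow_of_ne hij _ _ hp,
      coeff_single_mul_X_pow_of_ne hij.symm _ _ hq, zero_add, add_zero]
    refine ⟨fun a ha => ?_, fun b hb => ?_, ?_⟩
    · rw [if_neg (by omega), hmx a (by omega), add_zero]
    · rw [if_neg (by omega), hmy b (by omega), add_zero]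
    · rw [if_pos le_rfl, if_pos le_rfl, hmx q (by omega), hmy p (by omega), Nat.sub_self,
        Nat.sub_self, single_zero, single_zero]
  · classical
    rintro ⟨hx, hy, hxy⟩
    set c := coeff (single i q) f
    have hrest : f - C c * (X j ^ p + X i ^ q) ∈ cuspIdeal i j p q := by
      refine hN ((hN_iff _).2 ⟨fun a ha => ?_, fun b hb => ?_⟩)
      · rcases Nat.lt_succ_iff_lt_or_eq.1 ha with ha | rfl
        · simp [coeff_X_pow, single_eq_single_iff, hij, hp, hq, ha.ne, hx a ha]
        · simp [coeff_X_pow, single_eq_single_iff, hij, hp, c]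
      · rcases Nat.lt_succ_iff_lt_or_eq.1 hb with hb | rfl
        · simp [coeff_X_pow, single_eq_single_iff, hij.symm, hp, hq, hb.ne, hy b hb]
        · simp [coeff_X_pow, single_eq_single_iff, hij.symm, hq, hxy]
    simpa using add_mem (Ideal.mul_mem_left _ (C c) (X_pow_add_X_pow_mem_cuspIdeal p q)) hrest

theorem cuspIdeal_comm (p q : ℕ) :
    (cuspIdeal i j p q : Ideal (MvPowerSeries σ R)) = cuspIdeal j i q p := by
  rw [cuspIdeal, cuspIdeal, add_comm, mul_comm, Set.pair_comm i j]

theorem mul_X_fst_pow_mem_cuspIdeal_iff [Finite σ] (hij : i ≠ j) {p q ℓ : ℕ} (hp : p ≠ 0)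
    (hq : q ≠ 0) (hℓ : ℓ ≠ 0) {f : MvPowerSeries σ R} :
    f * X i ^ ℓ ∈ cuspIdeal i j p q ↔ ∀ c, c + ℓ ≤ q → coeff (single i c) f = 0 := by
  rw [mem_cuspIdeal_iff hij hp hq]
  simp only [coeff_single_mul_X_pow, coeff_single_mul_X_pow_of_ne hij.symm _ _ hℓ]
  constructor
  · rintro ⟨hlt, -, heq⟩ c hc
    rcases hc.lt_or_eq with hc | rfl
    · simpa using hlt _ hc
    · simpa using heq
  · intro h
    refine ⟨fun a ha => ?_, fun _ _ => trivial, ?_⟩ <;> split_ifs <;>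
      first | rfl | exact h _ (by omega)

theorem mul_X_snd_pow_mem_cuspIdeal_iff [Finite σ] (hij : i ≠ j) {p q ℓ : ℕ} (hp : p ≠ 0)
    (hq : q ≠ 0) (hℓ : ℓ ≠ 0) {f : MvPowerSeries σ R} :
    f * X j ^ ℓ ∈ cuspIdeal i j p q ↔ ∀ e, e + ℓ ≤ p → coeff (single j e) f = 0 := by
  rw [cuspIdeal_comm]
  exact mul_X_fst_pow_mem_cuspIdeal_iff hij.symm hq hp hℓ

theorem mem_cuspIdeal_colon_pow_iff [Finite σ] (hij : i ≠ j) {p q ℓ : ℕ} (hp : p ≠ 0)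
    (hq : q ≠ 0) (hℓ : ℓ ≠ 0) {f : MvPowerSeries σ R} :
    f ∈ (cuspIdeal i j p q).colon
        ((Ideal.span ({X i, X j} ∪ X '' {i, j}ᶜ) ^ ℓ : Ideal (MvPowerSeries σ R)) :
          Set (MvPowerSeries σ R)) ↔
      (∀ c, c + ℓ ≤ q → coeff (single i c) f = 0) ∧
        (∀ e, e + ℓ ≤ p → coeff (single j e) f = 0) := by
  have hZ : Ideal.span (X '' {i, j}ᶜ) ≤ cuspIdeal (R := R) i j p q :=
    Ideal.span_mono Set.subset_union_right
  rw [Ideal.span_union, Ideal.mem_colon_pow_span_pair_sup_iff hZ]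
  constructor
  · intro h
    exact ⟨(mul_X_fst_pow_mem_cuspIdeal_iff hij hp hq hℓ).1 (by simpa using h ℓ 0 rfl),
      (mul_X_snd_pow_mem_cuspIdeal_iff hij hp hq hℓ).1 (by simpa using h 0 ℓ (zero_add ℓ))⟩
  · rintro ⟨hx, hy⟩ a b hab
    rcases Nat.eq_zero_or_pos a with rfl | ha
    · rw [zero_add] at hab
      subst hab
      simpa using (mul_X_snd_pow_mem_cuspIdeal_iff hij hp hq hℓ).2 hy
    rcases Nat.eq_zero_or_pos b with rfl | hb
    · rw [add_zero] at hab
      subst hab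
      simpa using (mul_X_fst_pow_mem_cuspIdeal_iff hij hp hq hℓ).2 hx
    obtain ⟨a, rfl⟩ := Nat.exists_eq_add_of_lt ha
    obtain ⟨b, rfl⟩ := Nat.exists_eq_add_of_lt hb
    rw [show f * (X i ^ (0 + a + 1) * X j ^ (0 + b + 1)) = f * X i ^ a * X j ^ b * (X i * X j) by
      ring]
    exact Ideal.mul_mem_left _ _ (X_mul_X_mem_cuspIdeal p q)

end MvPowerSeries

/-- Colon filtration of the local model of a `C_{3,n}` cuspidal structure:
`J : I = (xⁿ, xy, y³, z)`, `J : I² = (x^{n−1}, xy, y², z)`,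
`J : I^ℓ = (x^{n+1−ℓ}, y, z)` for `3 ≤ ℓ ≤ n`, and `J : I^{n+1} = R`. -/
theorem stmt_13 (k : Type) [Field k] (n r : ℕ) (hn : 4 ≤ n)
    (x y : MvPowerSeries (Fin (r + 2)) k) (z : Fin r → MvPowerSeries (Fin (r + 2)) k)
    (hx : x = MvPowerSeries.X 0) (hy : y = MvPowerSeries.X 1)
    (hz : ∀ i : Fin r, z i = MvPowerSeries.X i.succ.succ)
    (I J : Ideal (MvPowerSeries (Fin (r + 2)) k))
    (hI : I = Ideal.span ({x, y} ∪ Set.range z))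
    (hJ : J = Ideal.span ({y ^ 3 + x ^ n, x * y} ∪ Set.range z)) :
    Submodule.colon J ((I ^ 1 : Ideal (MvPowerSeries (Fin (r + 2)) k)) : Set (MvPowerSeries (Fin (r + 2)) k)) = Ideal.span ({x ^ n, x * y, y ^ 3} ∪ Set.range z) ∧
    Submodule.colon J ((I ^ 2 : Ideal (MvPowerSeries (Fin (r + 2)) k)) : Set (MvPowerSeries (Fin (r + 2)) k)) =
      Ideal.span ({x ^ (n - 1), x * y, y ^ 2} ∪ Set.range z) ∧
    (∀ ℓ : ℕ, 3 ≤ ℓ → ℓ ≤ n →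
      Submodule.colon J ((I ^ ℓ : Ideal (MvPowerSeries (Fin (r + 2)) k)) : Set (MvPowerSeries (Fin (r + 2)) k)) = Ideal.span ({x ^ (n + 1 - ℓ), y} ∪ Set.range z)) ∧
    Submodule.colon J ((I ^ (n + 1) : Ideal (MvPowerSeries (Fin (r + 2)) k)) : Set (MvPowerSeries (Fin (r + 2)) k)) = ⊤ := by
  have hZ : Set.range z = X '' {0, 1}ᶜ := by
    rw [← Fin.range_succ_succ, ← Set.range_comp]
    exact congrArg Set.range (funext hz)
  subst hx hy hI hJ
  rw [hZ, ← show cuspIdeal (R := k) (0 : Fin (r + 2)) 1 3 n =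
    Ideal.span ({X 1 ^ 3 + X 0 ^ n, X 0 * X 1} ∪ X '' {0, 1}ᶜ) from rfl]
  have h01 : (0 : Fin (r + 2)) ≠ 1 := Fin.zero_ne_one
  have hcolon := fun ℓ (hℓ : ℓ ≠ 0) (f : MvPowerSeries (Fin (r + 2)) k) =>
    mem_cuspIdeal_colon_pow_iff (p := 3) (q := n) (f := f) h01 three_ne_zero (by omega) hℓ
  refine ⟨?_, ?_, fun ℓ hℓ3 hℓn => ?_, ?_⟩
  · ext f
    rw [hcolon 1 one_ne_zero, mem_span_X_pow_X_mul_X_X_pow_iff h01 (by omega) (by norm_num)]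
    simp only [Nat.lt_iff_add_one_le]
  · ext f
    rw [hcolon 2 two_ne_zero, mem_span_X_pow_X_mul_X_X_pow_iff h01 (by omega) (by norm_num)]
    exact and_congr (forall_congr' fun c => imp_congr_left (by omega))
      (forall_congr' fun e => imp_congr_left (by omega))
  · ext f
    rw [hcolon ℓ (by omega), mem_span_X_pow_X_iff h01 (by omega)]
    refine ⟨fun h a ha => h.1 a (by omega), fun h => ⟨fun c hc => h c (by omega), fun e he => ?_⟩⟩
    rw [show e = 0 by omega, single_zero, ← single_zero 0]
    exact h 0 (by omega)
  · exact Submodule.eq_top_iff'.2 fun f =>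
      (hcolon (n + 1) (by omega) f).2 ⟨fun c hc => by omega, fun e he => by omega⟩
end

section
/- Set I_ℓ = J : I^{n+1−ℓ} for 1 ≤ ℓ ≤ n and I_{n+1} = J. Then I·I_ℓ ⊆ I_{ℓ+1} for all 1 ≤ ℓ ≤ n, so each quotient I_ℓ/I_{ℓ+1} is a k ≅ R/I-vector space, and: dim_k I_ℓ/I_{ℓ+1} = 1 for 1 ≤ ℓ ≤ n−3 (generated by the class of x^ℓ), dim_k I_{n−2}/I_{n−1} = 2 (generated by the classes of x^{n−2} and y), dim_k I_{n−1}/I_n = 2 (generated by the classes of x^{n−1} and y²), and dim_k I_n/I_{n+1} = 1. (These are the local ranks of the graded pieces L, …, L^{n−3}, F', E', Lⁿ of the module M(Y).) -/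
/-!
The colon ideals are computed explicitly: `J : I^(n+1-ℓ)` is `(x^ℓ, y, z)` for `ℓ ≤ n - 2`,
`(x^(n-1), xy, y², z)` for `ℓ = n - 1` and `(xⁿ, xy, y³, z)` for `ℓ = n`. These are monomial
ideals, and a power series lies in a monomial ideal iff its coefficients vanish at the finitely
many monomials outside it. The inclusions `⊇` follow from `I_ℓ · I ⊆ I_(ℓ+1)`, checked on monomial
generators, together with `(xⁿ, xy, y³, z) · I ⊆ (x^(n+1), xy, y⁴, z) ⊆ J`. For `⊆`, every element
of `J = (y³ + xⁿ) + (xy, z)` has zero coefficients at `x^a` (`a < n`), `1`, `y`, `y²` and equal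
coefficients at `xⁿ` and `y³`; applied to `f x^(n+1-ℓ)`, `f y²` and `f y` this kills the
coefficients of `f` at the monomials outside the candidate ideal.

Since `R = k + I` and `I · I_ℓ ⊆ I_(ℓ+1)`, each graded piece is the `k`-span of the classes of the
generators of `I_ℓ` not lying in `I_(ℓ+1)`; coefficient functionals show these are independent.
-/

/-- For ideals `B ⊆ A` of `R`, the image of `A` in `R ⧸ B`, viewed as a
`k`-submodule of `R ⧸ B`; this represents the subquotient `A/B`. -/
noncomputable def gradedPiece (k : Type) [Field k] {R : Type} [CommRing R] [Algebra k R]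
    (A B : Ideal R) : Submodule k (R ⧸ B) :=
  Submodule.restrictScalars k (A.map (Ideal.Quotient.mk B))

namespace MvPowerSeries

variable {σ R : Type*} [CommSemiring R]

theorem monomial_one_mem_span_monomial_of_le {S : Set (σ →₀ ℕ)} {m d : σ →₀ ℕ} (hm : m ∈ S)
    (hmd : m ≤ d) : monomial d (1 : R) ∈ Ideal.span ((monomial · (1 : R)) '' S) := by
  rw [← tsub_add_cancel_of_le hmd, ← mul_one (1 : R), ← monomial_mul_monomial]
  exact Ideal.mul_mem_left _ _ (Ideal.subset_span ⟨m, hm, by simp⟩)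

theorem span_monomial_mul_span_monomial_le {S T U : Set (σ →₀ ℕ)}
    (h : ∀ s ∈ S, ∀ t ∈ T, ∃ u ∈ U, u ≤ s + t) :
    Ideal.span ((monomial · (1 : R)) '' S) * Ideal.span ((monomial · (1 : R)) '' T) ≤
      Ideal.span ((monomial · (1 : R)) '' U) := by
  rw [Ideal.span_mul_span', Ideal.span_le]
  rintro _ ⟨_, ⟨s, hs, rfl⟩, _, ⟨t, ht, rfl⟩, rfl⟩
  obtain ⟨u, hu, hut⟩ := h s hs t ht
  change monomial s 1 * monomial t 1 ∈ Ideal.span _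
  rw [monomial_mul_monomial, mul_one]
  exact monomial_one_mem_span_monomial_of_le hu hut

theorem coeff_eq_zero_of_mem_span_monomial {S : Set (σ →₀ ℕ)} {f : MvPowerSeries σ R}
    (hf : f ∈ Ideal.span ((monomial · (1 : R)) '' S)) {d : σ →₀ ℕ} (hd : ∀ m ∈ S, ¬m ≤ d) :
    coeff d f = 0 := by
  classical
  induction hf using Submodule.span_induction generalizing d with
  | mem g hg =>
    obtain ⟨m, hm, rfl⟩ := hg
    rw [coeff_monomial, if_neg]
    rintro rfl
    exact hd d hm le_rfl
  | zero => simp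
  | add u v _ _ hu hv => rw [map_add, hu hd, hv hd, add_zero]
  | smul u v _ hv =>
    rw [smul_eq_mul, coeff_mul]
    refine Finset.sum_eq_zero fun p hp => ?_
    have hpd : p.2 ≤ d := (Finset.HasAntidiagonal.mem_antidiagonal.mp hp) ▸ le_add_self
    rw [hv fun m hm hmp => hd m hm (hmp.trans hpd), mul_zero]

theorem mem_span_monomial_of_coeff_eq_zero {s : Finset (σ →₀ ℕ)} {f : MvPowerSeries σ R}
    (hf : ∀ d, (∀ m ∈ s, ¬m ≤ d) → coeff d f = 0) :
    f ∈ Ideal.span ((monomial · (1 : R)) '' s) := by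
  classical
  -- each exponent lying above some `m ∈ s` is assigned to one such `m`, and `g m` collects
  -- the coefficients of `f` at the exponents assigned to `m`
  let pick (d : σ →₀ ℕ) : σ →₀ ℕ := Classical.epsilon fun m => m ∈ s ∧ m ≤ d
  let g (m : σ →₀ ℕ) : MvPowerSeries σ R := fun e => if pick (e + m) = m then coeff (e + m) f else 0
  have hg (m e : σ →₀ ℕ) : coeff e (g m) = if pick (e + m) = m then coeff (e + m) f else 0 := rfl
  have hfg : f = ∑ m ∈ s, monomial m 1 * g m := by
    ext d
    simp only [map_sum, coeff_monomial_mul, one_mul, hg]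
    by_cases hd : ∃ m ∈ s, m ≤ d
    · obtain ⟨hps, hpd⟩ : pick d ∈ s ∧ pick d ≤ d := Classical.epsilon_spec hd
      rw [Finset.sum_eq_single_of_mem (pick d) hps]
      · rw [if_pos hpd, tsub_add_cancel_of_le hpd, if_pos rfl]
      · intro m _ hm
        split_ifs with h1 h2
        · rw [tsub_add_cancel_of_le h1] at h2
          exact absurd h2.symm hm
        all_goals rfl
    · push Not at hd
      rw [hf d hd, Finset.sum_eq_zero fun m hm => if_neg (hd m hm)]
  rw [hfg]
  exact Ideal.sum_mem _ fun m hm => Ideal.mul_mem_right _ _ (Ideal.subset_span ⟨m, hm, rfl⟩)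

end MvPowerSeries

namespace Ideal

variable {R : Type*} [CommRing R] {A I J : Ideal R}

theorem le_colon_iff_mul_le : A ≤ J.colon (I : Set R) ↔ A * I ≤ J := by
  rw [Ideal.mul_le]
  simp only [SetLike.le_def, Submodule.mem_colon, SetLike.mem_coe, smul_eq_mul]

theorem colon_pow_succ (m : ℕ) :
    J.colon ↑(I ^ (m + 1)) = (J.colon ↑(I ^ m)).colon (I : Set R) :=
  eq_of_forall_le_iff fun A => by
    rw [le_colon_iff_mul_le, le_colon_iff_mul_le, le_colon_iff_mul_le, pow_succ', mul_assoc]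

theorem colon_pow_zero : J.colon ↑(I ^ 0) = J := by
  rw [pow_zero, one_eq_top, Submodule.top_coe, Submodule.colon_univ]

theorem mul_colon_pow_succ_le (m : ℕ) : I * J.colon ↑(I ^ (m + 1)) ≤ J.colon ↑(I ^ m) := by
  rw [mul_comm, ← le_colon_iff_mul_le, colon_pow_succ]

theorem le_colon_pow_succ {K K' : Ideal R} {m : ℕ} (hK : K * I ≤ K')
    (hK' : K' ≤ J.colon ↑(I ^ m)) : K ≤ J.colon ↑(I ^ (m + 1)) := by
  rw [colon_pow_succ, le_colon_iff_mul_le]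
  exact hK.trans hK'

end Ideal

theorem gradedPiece_eq_span {k R : Type} [Field k] [CommRing R] [Algebra k R] {I A B : Ideal R}
    (hI : ∀ q : R, ∃ c : k, q - algebraMap k R c ∈ I) (hAI : A * I ≤ B) {s : Set R}
    (hsA : s ⊆ A) (hA : A ≤ B ⊔ Ideal.span s) :
    gradedPiece k A B = Submodule.span k (Ideal.Quotient.mk B '' s) := by
  have hmap : A.map (Ideal.Quotient.mk B) = Ideal.span (Ideal.Quotient.mk B '' s) := by
    refine le_antisymm ((Ideal.map_mono hA).trans ?_) ?_
    · rw [Ideal.map_sup, Ideal.map_span, Ideal.map_quotient_self, bot_sup_eq]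
    · rw [Ideal.span_le]
      rintro _ ⟨v, hv, rfl⟩
      exact Ideal.mem_map_of_mem _ (hsA hv)
  have hkill : ∀ i ∈ I, ∀ x ∈ A.map (Ideal.Quotient.mk B), Ideal.Quotient.mk B i * x = 0 := by
    intro i hi x hx
    have hmem : Ideal.Quotient.mk B i * x ∈ (A * I).map (Ideal.Quotient.mk B) := by
      rw [Ideal.map_mul]
      exact Ideal.mul_mem_mul_rev hx (Ideal.mem_map_of_mem _ hi)
    simpa only [Ideal.map_quotient_self, Ideal.mem_bot] using Ideal.map_mono hAI hmem
  unfold gradedPiece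
  rw [hmap]
  refine le_antisymm (fun x hx => ?_) (Submodule.span_le.mpr Ideal.subset_span)
  rw [Submodule.restrictScalars_mem] at hx
  induction hx using Submodule.span_induction with
  | mem x hx => exact Submodule.subset_span hx
  | zero => exact zero_mem _
  | add x y _ _ hx hy => exact add_mem hx hy
  | smul a x hx ih =>
    obtain ⟨q, rfl⟩ := Ideal.Quotient.mk_surjective a
    obtain ⟨c, hc⟩ := hI q
    have hq : Ideal.Quotient.mk B q =
        algebraMap k (R ⧸ B) c + Ideal.Quotient.mk B (q - algebraMap k R c) := by
      rw [map_sub, Ideal.Quotient.mk_algebraMap, add_sub_cancel]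
    rw [smul_eq_mul, hq, add_mul, hkill _ hc _ (by rw [hmap]; exact hx), add_zero,
      ← Algebra.smul_def]
    exact Submodule.smul_mem _ c ih

theorem finrank_span_pair {k V : Type*} [Field k] [AddCommGroup V] [Module k V] {v w : V}
    (h : LinearIndependent k ![v, w]) : Module.finrank k (Submodule.span k {v, w}) = 2 := by
  rw [← Matrix.range_cons_cons_empty v w ![], finrank_span_eq_card h, Fintype.card_fin]

theorem linearIndependent_mk_pair {k R : Type*} [Field k] [CommRing R] [Algebra k R]
    {B : Ideal R} (φ ψ : R →ₗ[k] k) (hB : ∀ f ∈ B, φ f = 0 ∧ ψ f = 0) {v w : R}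
    (hv : φ v = 1 ∧ ψ v = 0) (hw : φ w = 0 ∧ ψ w = 1) :
    LinearIndependent k ![Ideal.Quotient.mk B v, Ideal.Quotient.mk B w] := by
  refine LinearIndependent.pair_iff.mpr fun s t hst => ?_
  rw [← Ideal.Quotient.mkₐ_eq_mk k, ← map_smul, ← map_smul, ← map_add,
    Ideal.Quotient.mkₐ_eq_mk, Ideal.Quotient.eq_zero_iff_mem] at hst
  obtain ⟨hφ, hψ⟩ := hB _ hst
  simp only [map_add, map_smul, hv, hw, smul_eq_mul, mul_one, mul_zero, add_zero, zero_add]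
    at hφ hψ
  exact ⟨hφ, hψ⟩

namespace CuspidalModel

open MvPowerSeries Finsupp

variable {R : Type*} [CommRing R] {r : ℕ}

-- The variables are `x = X 0`, `y = X 1` and `z_i = X (i + 2)`; `xyExp a b` is the exponent of
-- `x ^ a * y ^ b`.
noncomputable def xyExp (a b : ℕ) : Fin (r + 2) →₀ ℕ := single 0 a + single 1 b

@[simp] lemma xyExp_apply_zero (a b : ℕ) : (xyExp a b : Fin (r + 2) →₀ ℕ) 0 = a := by
  simp [xyExp]

@[simp] lemma xyExp_apply_one (a b : ℕ) : (xyExp a b : Fin (r + 2) →₀ ℕ) 1 = b := by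
  simp [xyExp]

@[simp] lemma xyExp_apply_succ_succ (a b : ℕ) (i : Fin r) :
    (xyExp a b : Fin (r + 2) →₀ ℕ) i.succ.succ = 0 := by
  simp [xyExp, (Fin.succ_succ_ne_one i).symm]

lemma eq_xyExp {d : Fin (r + 2) →₀ ℕ} (hd : ∀ i : Fin r, d i.succ.succ = 0) :
    d = xyExp (d 0) (d 1) := by
  ext j
  induction j using Fin.cases with
  | zero => simp
  | succ j =>
    induction j using Fin.cases with
    | zero => simp
    | succ i => simp [hd i]

@[simp] lemma xyExp_le_xyExp {a b c e : ℕ} :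
    (xyExp a b : Fin (r + 2) →₀ ℕ) ≤ xyExp c e ↔ a ≤ c ∧ b ≤ e := by
  refine ⟨fun h => ⟨by simpa using h 0, by simpa using h 1⟩, fun ⟨hac, hbe⟩ j => ?_⟩
  induction j using Fin.cases with
  | zero => simpa
  | succ j =>
    induction j using Fin.cases with
    | zero => simpa
    | succ i => simp

lemma xyExp_add (a b c e : ℕ) :
    (xyExp a b + xyExp c e : Fin (r + 2) →₀ ℕ) = xyExp (a + c) (b + e) := by
  rw [eq_xyExp (d := xyExp a b + xyExp c e) (by simp)]
  simp

lemma xyExp_tsub (a b c e : ℕ) :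
    (xyExp a b - xyExp c e : Fin (r + 2) →₀ ℕ) = xyExp (a - c) (b - e) := by
  rw [eq_xyExp (d := xyExp a b - xyExp c e) (by simp)]
  simp

lemma xyExp_inj {a b c e : ℕ} :
    (xyExp a b : Fin (r + 2) →₀ ℕ) = xyExp c e ↔ a = c ∧ b = e := by
  simp only [le_antisymm_iff, xyExp_le_xyExp]
  tauto

@[simp] lemma xyExp_zero_zero : (xyExp 0 0 : Fin (r + 2) →₀ ℕ) = 0 := by
  simp [xyExp]

lemma X_zero_pow_mul_X_one_pow (a b : ℕ) :
    (X 0 ^ a * X 1 ^ b : MvPowerSeries (Fin (r + 2)) R) = monomial (xyExp a b) 1 := by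
  rw [X_pow_eq, X_pow_eq, monomial_mul_monomial, mul_one, xyExp]

lemma X_zero_pow (a : ℕ) :
    (X 0 ^ a : MvPowerSeries (Fin (r + 2)) R) = monomial (xyExp a 0) 1 := by
  simpa using X_zero_pow_mul_X_one_pow (R := R) (r := r) a 0

lemma X_one_pow (b : ℕ) :
    (X 1 ^ b : MvPowerSeries (Fin (r + 2)) R) = monomial (xyExp 0 b) 1 := by
  simpa using X_zero_pow_mul_X_one_pow (R := R) (r := r) 0 b

lemma X_one_eq_monomial : (X 1 : MvPowerSeries (Fin (r + 2)) R) = monomial (xyExp 0 1) 1 := by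
  simpa using X_one_pow (R := R) (r := r) 1

lemma coeff_xyExp_monomial (a b c e : ℕ) (t : R) :
    coeff (xyExp a b) (monomial (xyExp c e) t : MvPowerSeries (Fin (r + 2)) R) =
      if a = c ∧ b = e then t else 0 := by
  classical
  simp only [coeff_monomial, xyExp_inj]

lemma coeff_xyExp_mul_monomial (a b c e : ℕ) (u : MvPowerSeries (Fin (r + 2)) R) :
    coeff (xyExp a b) (u * monomial (xyExp c e) 1) =
      if c ≤ a ∧ e ≤ b then coeff (xyExp (a - c) (b - e)) u else 0 := by
  simp only [coeff_mul_monomial, xyExp_le_xyExp, xyExp_tsub, mul_one]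

variable (R r) in
noncomputable def xyIdeal (P : Finset (ℕ × ℕ)) : Ideal (MvPowerSeries (Fin (r + 2)) R) :=
  Ideal.span ((fun p : ℕ × ℕ => X 0 ^ p.1 * X 1 ^ p.2) '' ↑P ∪
    Set.range fun i : Fin r => X i.succ.succ)

lemma xyIdeal_eq_span_monomial (P : Finset (ℕ × ℕ)) :
    xyIdeal R r P = Ideal.span ((monomial · 1) ''
      ↑(P.image (fun p : ℕ × ℕ => xyExp p.1 p.2) ∪
        Finset.univ.image fun i : Fin r => single i.succ.succ 1)) := by
  rw [xyIdeal, Finset.coe_union, Set.image_union, Finset.coe_image, Finset.coe_image,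
    Set.image_image, Set.image_image, Finset.coe_univ, Set.image_univ]
  simp only [X_zero_pow_mul_X_one_pow]
  simp only [X_def]

theorem mem_xyIdeal_iff {P : Finset (ℕ × ℕ)} {f : MvPowerSeries (Fin (r + 2)) R} :
    f ∈ xyIdeal R r P ↔ ∀ a b, (∀ p ∈ P, ¬(p.1 ≤ a ∧ p.2 ≤ b)) → coeff (xyExp a b) f = 0 := by
  rw [xyIdeal_eq_span_monomial]
  refine ⟨fun hf a b hab => coeff_eq_zero_of_mem_span_monomial hf ?_,
    fun hf => mem_span_monomial_of_coeff_eq_zero fun d hd => ?_⟩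
  · simp only [Finset.coe_union, Finset.coe_image, Set.mem_union, Set.mem_image,
      Finset.mem_coe, Finset.mem_univ, true_and]
    rintro _ (⟨p, hp, rfl⟩ | ⟨i, rfl⟩)
    · simpa using hab p hp
    · simp [single_le_iff]
  · have hz (i : Fin r) : d i.succ.succ = 0 := by
      simpa [single_le_iff] using hd (single i.succ.succ 1) (by simp)
    rw [eq_xyExp hz]
    refine hf _ _ fun p hp hle =>
      hd (xyExp p.1 p.2) (Finset.mem_union_left _ (Finset.mem_image_of_mem _ hp)) ?_
    rw [eq_xyExp hz]
    simpa using hle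

theorem xyIdeal_mul_le {P Q T : Finset (ℕ × ℕ)}
    (h : ∀ p ∈ P, ∀ q ∈ Q, ∃ t ∈ T, t.1 ≤ p.1 + q.1 ∧ t.2 ≤ p.2 + q.2) :
    xyIdeal R r P * xyIdeal R r Q ≤ xyIdeal R r T := by
  simp only [xyIdeal_eq_span_monomial]
  refine span_monomial_mul_span_monomial_le ?_
  simp only [Finset.coe_union, Finset.coe_image, Set.mem_union, Set.mem_image,
    Finset.mem_coe, Finset.coe_univ, Set.image_univ, Set.mem_range]
  rintro _ (⟨p, hp, rfl⟩ | ⟨i, rfl⟩) _ (⟨q, hq, rfl⟩ | ⟨j, rfl⟩)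
  · obtain ⟨t, ht, h1, h2⟩ := h p hp q hq
    exact ⟨xyExp t.1 t.2, Or.inl ⟨t, ht, rfl⟩, by simpa [xyExp_add] using ⟨h1, h2⟩⟩
  · exact ⟨_, Or.inr ⟨j, rfl⟩, le_add_self⟩
  · exact ⟨_, Or.inr ⟨i, rfl⟩, le_self_add⟩
  · exact ⟨_, Or.inr ⟨i, rfl⟩, le_self_add⟩

theorem xyIdeal_le_iff {P : Finset (ℕ × ℕ)} {L : Ideal (MvPowerSeries (Fin (r + 2)) R)} :
    xyIdeal R r P ≤ L ↔
      (∀ p ∈ P, X 0 ^ p.1 * X 1 ^ p.2 ∈ L) ∧ ∀ i : Fin r, X i.succ.succ ∈ L := by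
  rw [xyIdeal, Ideal.span_le, Set.union_subset_iff, Set.image_subset_iff, Set.range_subset_iff]
  rfl

theorem X_succ_succ_mem_xyIdeal (P : Finset (ℕ × ℕ)) (i : Fin r) :
    (X i.succ.succ : MvPowerSeries (Fin (r + 2)) R) ∈ xyIdeal R r P :=
  Ideal.subset_span (Or.inr ⟨i, rfl⟩)

variable (R r) in
noncomputable def cuspIdeal (n : ℕ) : Ideal (MvPowerSeries (Fin (r + 2)) R) :=
  Ideal.span ({X 1 ^ 3 + X 0 ^ n, X 0 * X 1} ∪ Set.range fun i : Fin r => X i.succ.succ)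

lemma cuspIdeal_eq_sup (n : ℕ) :
    cuspIdeal R r n = Ideal.span {X 1 ^ 3 + X 0 ^ n} ⊔ xyIdeal R r {(1, 1)} := by
  rw [cuspIdeal, Set.insert_union, Ideal.span_insert, xyIdeal]
  simp

theorem coeff_of_mem_cuspIdeal {n : ℕ} (hn : n ≠ 0) {f : MvPowerSeries (Fin (r + 2)) R}
    (hf : f ∈ cuspIdeal R r n) :
    (∀ a < n, coeff (xyExp a 0) f = 0) ∧ (∀ b < 3, coeff (xyExp 0 b) f = 0) ∧
      coeff (xyExp n 0) f = coeff (xyExp 0 3) f := by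
  rw [cuspIdeal_eq_sup, Submodule.mem_sup] at hf
  obtain ⟨_, hu, h, hh, rfl⟩ := hf
  obtain ⟨u, rfl⟩ := Ideal.mem_span_singleton'.mp hu
  have hxa (a : ℕ) : coeff (xyExp a 0) h = 0 := mem_xyIdeal_iff.mp hh a 0 (by simp)
  have hyb (b : ℕ) : coeff (xyExp 0 b) h = 0 := mem_xyIdeal_iff.mp hh 0 b (by simp)
  simp only [mul_add, X_zero_pow, X_one_pow, map_add, coeff_xyExp_mul_monomial, hxa, hyb]
  exact ⟨fun a ha => by simp [ha.not_ge], fun b hb => by simp [show ¬3 ≤ b by omega, hn],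
    by simp [hn]⟩

theorem coeff_eq_zero_of_mul_X_zero_pow_mem {n c a : ℕ} (hn : n ≠ 0) (hc : c ≠ 0)
    {f : MvPowerSeries (Fin (r + 2)) R} (h : f * X 0 ^ c ∈ cuspIdeal R r n) (hac : a + c ≤ n) :
    coeff (xyExp a 0) f = 0 := by
  obtain ⟨hx, -, hxy⟩ := coeff_of_mem_cuspIdeal hn h
  have key : coeff (xyExp (a + c) 0) (f * X 0 ^ c) = coeff (xyExp a 0) f := by
    simp [X_zero_pow, coeff_xyExp_mul_monomial]
  rcases hac.lt_or_eq with hlt | heq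
  · rw [← key]
    exact hx _ hlt
  · rw [← key, heq, hxy]
    simp [X_zero_pow, coeff_xyExp_mul_monomial, hc]

theorem coeff_eq_zero_of_mul_X_one_pow_mem {n e b : ℕ} (hn : n ≠ 0) (he : e ≠ 0)
    {f : MvPowerSeries (Fin (r + 2)) R} (h : f * X 1 ^ e ∈ cuspIdeal R r n) (hbe : b + e ≤ 3) :
    coeff (xyExp 0 b) f = 0 := by
  obtain ⟨-, hy, hxy⟩ := coeff_of_mem_cuspIdeal hn h
  have key : coeff (xyExp 0 (b + e)) (f * X 1 ^ e) = coeff (xyExp 0 b) f := by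
    simp [X_one_pow, coeff_xyExp_mul_monomial]
  rcases hbe.lt_or_eq with hlt | heq
  · rw [← key]
    exact hy _ hlt
  · rw [← key, heq, ← hxy]
    simp [X_one_pow, coeff_xyExp_mul_monomial, he]

theorem X_zero_mem_maxIdeal :
    (X 0 : MvPowerSeries (Fin (r + 2)) R) ∈ xyIdeal R r {(1, 0), (0, 1)} :=
  Ideal.subset_span (Or.inl ⟨(1, 0), by simp, by simp⟩)

theorem X_one_mem_maxIdeal :
    (X 1 : MvPowerSeries (Fin (r + 2)) R) ∈ xyIdeal R r {(1, 0), (0, 1)} :=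
  Ideal.subset_span (Or.inl ⟨(0, 1), by simp, by simp⟩)

theorem colon_cuspIdeal_pow_le {n ℓ : ℕ} (hℓ : ℓ ≤ n) :
    (cuspIdeal R r n).colon ↑(xyIdeal R r {(1, 0), (0, 1)} ^ (n + 1 - ℓ)) ≤
      xyIdeal R r {(ℓ, 0), (0, 1)} := by
  intro f hf
  have hx : f * X 0 ^ (n + 1 - ℓ) ∈ cuspIdeal R r n :=
    Submodule.mem_colon.mp hf _ (Ideal.pow_mem_pow X_zero_mem_maxIdeal _)
  refine mem_xyIdeal_iff.mpr fun a b hab => ?_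
  simp only [Finset.mem_insert, Finset.mem_singleton, forall_eq_or_imp, forall_eq] at hab
  obtain ⟨ha, rfl⟩ : a < ℓ ∧ b = 0 := by omega
  exact coeff_eq_zero_of_mul_X_zero_pow_mem (by omega) (by omega) hx (by omega)

theorem colon_cuspIdeal_sq_le {n : ℕ} (hn : n ≠ 0) :
    (cuspIdeal R r n).colon ↑(xyIdeal R r {(1, 0), (0, 1)} ^ 2) ≤
      xyIdeal R r {(n - 1, 0), (1, 1), (0, 2)} := by
  intro f hf
  have hx : f * X 0 ^ 2 ∈ cuspIdeal R r n :=
    Submodule.mem_colon.mp hf _ (Ideal.pow_mem_pow X_zero_mem_maxIdeal _)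
  have hy : f * X 1 ^ 2 ∈ cuspIdeal R r n :=
    Submodule.mem_colon.mp hf _ (Ideal.pow_mem_pow X_one_mem_maxIdeal _)
  refine mem_xyIdeal_iff.mpr fun a b hab => ?_
  simp only [Finset.mem_insert, Finset.mem_singleton, forall_eq_or_imp, forall_eq] at hab
  obtain ⟨ha, rfl⟩ | ⟨rfl, rfl⟩ : a + 2 ≤ n ∧ b = 0 ∨ a = 0 ∧ b = 1 := by omega
  · exact coeff_eq_zero_of_mul_X_zero_pow_mem hn two_ne_zero hx ha
  · exact coeff_eq_zero_of_mul_X_one_pow_mem hn two_ne_zero hy le_rfl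

theorem colon_cuspIdeal_le {n : ℕ} (hn : n ≠ 0) :
    (cuspIdeal R r n).colon ↑(xyIdeal R r {(1, 0), (0, 1)}) ≤
      xyIdeal R r {(n, 0), (1, 1), (0, 3)} := by
  intro f hf
  have hx : f * X 0 ^ 1 ∈ cuspIdeal R r n := by
    simpa using Submodule.mem_colon.mp hf _ X_zero_mem_maxIdeal
  have hy : f * X 1 ^ 1 ∈ cuspIdeal R r n := by
    simpa using Submodule.mem_colon.mp hf _ X_one_mem_maxIdeal
  refine mem_xyIdeal_iff.mpr fun a b hab => ?_
  simp only [Finset.mem_insert, Finset.mem_singleton, forall_eq_or_imp, forall_eq] at hab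
  obtain ⟨ha, rfl⟩ | ⟨rfl, hb⟩ : a + 1 ≤ n ∧ b = 0 ∨ a = 0 ∧ b + 1 ≤ 3 := by omega
  · exact coeff_eq_zero_of_mul_X_zero_pow_mem hn one_ne_zero hx ha
  · exact coeff_eq_zero_of_mul_X_one_pow_mem hn one_ne_zero hy hb

theorem xyIdeal_le_cuspIdeal {n : ℕ} (hn : n ≠ 0) :
    xyIdeal R r {(n + 1, 0), (1, 1), (0, 4)} ≤ cuspIdeal R r n := by
  obtain ⟨m, rfl⟩ := Nat.exists_eq_succ_of_ne_zero hn
  have hg : (X 1 ^ 3 + X 0 ^ (m + 1) : MvPowerSeries (Fin (r + 2)) R) ∈ cuspIdeal R r (m + 1) :=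
    Ideal.subset_span (by simp)
  have hxy : (X 0 * X 1 : MvPowerSeries (Fin (r + 2)) R) ∈ cuspIdeal R r (m + 1) :=
    Ideal.subset_span (by simp)
  simp only [xyIdeal_le_iff, Finset.mem_insert, Finset.mem_singleton, forall_eq_or_imp, forall_eq]
  refine ⟨⟨?_, by simpa using hxy, ?_⟩, fun i => Ideal.subset_span (Or.inr ⟨i, rfl⟩)⟩
  · rw [show (X 0 ^ (m + 1 + 1) * X 1 ^ 0 : MvPowerSeries (Fin (r + 2)) R) =
      X 0 * (X 1 ^ 3 + X 0 ^ (m + 1)) - X 1 ^ 2 * (X 0 * X 1) by ring]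
    exact sub_mem (Ideal.mul_mem_left _ _ hg) (Ideal.mul_mem_left _ _ hxy)
  · rw [show (X 0 ^ 0 * X 1 ^ 4 : MvPowerSeries (Fin (r + 2)) R) =
      X 1 * (X 1 ^ 3 + X 0 ^ (m + 1)) - X 0 ^ m * (X 0 * X 1) by ring]
    exact sub_mem (Ideal.mul_mem_left _ _ hg) (Ideal.mul_mem_left _ _ hxy)

theorem xyIdeal_mul_maxIdeal_le_cuspIdeal {n : ℕ} (hn : n ≠ 0) :
    xyIdeal R r {(n, 0), (1, 1), (0, 3)} * xyIdeal R r {(1, 0), (0, 1)} ≤ cuspIdeal R r n :=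
  (xyIdeal_mul_le (by
    simp only [Finset.mem_insert, Finset.mem_singleton, forall_eq_or_imp, forall_eq,
      exists_eq_or_imp, exists_eq_left]
    omega)).trans (xyIdeal_le_cuspIdeal hn)

theorem xyIdeal_mul_maxIdeal_le_succ (ℓ : ℕ) :
    xyIdeal R r {(ℓ, 0), (0, 1)} * xyIdeal R r {(1, 0), (0, 1)} ≤
      xyIdeal R r {(ℓ + 1, 0), (0, 1)} :=
  xyIdeal_mul_le (by
    simp only [Finset.mem_insert, Finset.mem_singleton, forall_eq_or_imp, forall_eq,
      exists_eq_or_imp, exists_eq_left]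
    omega)

theorem xyIdeal_sub_two_mul_maxIdeal_le {n : ℕ} (hn : 3 ≤ n) :
    xyIdeal R r {(n - 2, 0), (0, 1)} * xyIdeal R r {(1, 0), (0, 1)} ≤
      xyIdeal R r {(n - 1, 0), (1, 1), (0, 2)} :=
  xyIdeal_mul_le (by
    simp only [Finset.mem_insert, Finset.mem_singleton, forall_eq_or_imp, forall_eq,
      exists_eq_or_imp, exists_eq_left]
    omega)

theorem xyIdeal_sub_one_mul_maxIdeal_le {n : ℕ} (hn : 2 ≤ n) :
    xyIdeal R r {(n - 1, 0), (1, 1), (0, 2)} * xyIdeal R r {(1, 0), (0, 1)} ≤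
      xyIdeal R r {(n, 0), (1, 1), (0, 3)} :=
  xyIdeal_mul_le (by
    simp only [Finset.mem_insert, Finset.mem_singleton, forall_eq_or_imp, forall_eq,
      exists_eq_or_imp, exists_eq_left]
    omega)

theorem colon_cuspIdeal_eq {n : ℕ} (hn : n ≠ 0) :
    (cuspIdeal R r n).colon ↑(xyIdeal R r {(1, 0), (0, 1)}) =
      xyIdeal R r {(n, 0), (1, 1), (0, 3)} :=
  le_antisymm (colon_cuspIdeal_le hn)
    (Ideal.le_colon_iff_mul_le.mpr (xyIdeal_mul_maxIdeal_le_cuspIdeal hn))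

theorem colon_cuspIdeal_sq_eq {n : ℕ} (hn : 2 ≤ n) :
    (cuspIdeal R r n).colon ↑(xyIdeal R r {(1, 0), (0, 1)} ^ 2) =
      xyIdeal R r {(n - 1, 0), (1, 1), (0, 2)} := by
  refine le_antisymm (colon_cuspIdeal_sq_le (by omega)) (Ideal.le_colon_pow_succ (m := 1)
    (xyIdeal_sub_one_mul_maxIdeal_le hn) ?_)
  rw [pow_one, colon_cuspIdeal_eq (by omega)]

theorem colon_cuspIdeal_pow_eq {n ℓ : ℕ} (hn : 3 ≤ n) (hℓ : ℓ ≤ n - 2) :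
    (cuspIdeal R r n).colon ↑(xyIdeal R r {(1, 0), (0, 1)} ^ (n + 1 - ℓ)) =
      xyIdeal R r {(ℓ, 0), (0, 1)} := by
  refine le_antisymm (colon_cuspIdeal_pow_le (by omega)) ?_
  induction hℓ using Nat.decreasingInduction with
  | self =>
    rw [show n + 1 - (n - 2) = 2 + 1 by omega]
    exact Ideal.le_colon_pow_succ (xyIdeal_sub_two_mul_maxIdeal_le hn)
      (colon_cuspIdeal_sq_eq (by omega)).ge
  | of_succ ℓ hℓ ih =>
    rw [show n + 1 - ℓ = n + 1 - (ℓ + 1) + 1 by omega]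
    exact Ideal.le_colon_pow_succ (xyIdeal_mul_maxIdeal_le_succ ℓ) ih

lemma maxIdeal_eq_span :
    xyIdeal R r {(1, 0), (0, 1)} =
      Ideal.span ({X 0, X 1} ∪ Set.range fun i : Fin r => X i.succ.succ) := by
  rw [xyIdeal]
  simp [Set.image_insert_eq]

variable (R r) in
theorem exists_sub_algebraMap_mem_maxIdeal (q : MvPowerSeries (Fin (r + 2)) R) :
    ∃ c : R, q - algebraMap R _ c ∈ xyIdeal R r {(1, 0), (0, 1)} := by
  refine ⟨constantCoeff q, mem_xyIdeal_iff.mpr fun a b hab => ?_⟩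
  simp only [Finset.mem_insert, Finset.mem_singleton, forall_eq_or_imp, forall_eq] at hab
  obtain ⟨rfl, rfl⟩ : a = 0 ∧ b = 0 := by omega
  simp [← c_eq_algebraMap]

section Graded

variable {k : Type} [Field k]

theorem gradedPiece_xyIdeal_succ (ℓ : ℕ) :
    gradedPiece k (xyIdeal k r {(ℓ, 0), (0, 1)}) (xyIdeal k r {(ℓ + 1, 0), (0, 1)}) =
      Submodule.span k {Ideal.Quotient.mk _ (X 0 ^ ℓ)} := by
  have hx : X 0 ^ ℓ ∈ xyIdeal k r {(ℓ, 0), (0, 1)} :=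
    Ideal.subset_span (Or.inl ⟨(ℓ, 0), by simp, by simp⟩)
  rw [gradedPiece_eq_span (exists_sub_algebraMap_mem_maxIdeal k r)
    (xyIdeal_mul_maxIdeal_le_succ ℓ) (Set.singleton_subset_iff.mpr hx),
    Set.image_singleton]
  simp only [xyIdeal_le_iff, Finset.mem_insert, Finset.mem_singleton, forall_eq_or_imp, forall_eq]
  refine ⟨⟨Submodule.mem_sup_right (by simp),
    Submodule.mem_sup_left (Ideal.subset_span (Or.inl ⟨(0, 1), by simp, by simp⟩))⟩,
    fun i => Submodule.mem_sup_left (X_succ_succ_mem_xyIdeal _ i)⟩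

theorem finrank_gradedPiece_xyIdeal_succ (ℓ : ℕ) :
    Module.finrank k (gradedPiece k (xyIdeal k r {(ℓ, 0), (0, 1)})
      (xyIdeal k r {(ℓ + 1, 0), (0, 1)})) = 1 := by
  rw [gradedPiece_xyIdeal_succ, finrank_span_singleton]
  rw [Ne, Ideal.Quotient.eq_zero_iff_mem, mem_xyIdeal_iff]
  intro h
  simpa [X_zero_pow, coeff_xyExp_monomial] using h ℓ 0 (by simp)

theorem gradedPiece_xyIdeal_sub_two {n : ℕ} (hn : 3 ≤ n) :
    gradedPiece k (xyIdeal k r {(n - 2, 0), (0, 1)})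
        (xyIdeal k r {(n - 1, 0), (1, 1), (0, 2)}) =
      Submodule.span k {Ideal.Quotient.mk _ (X 0 ^ (n - 2)), Ideal.Quotient.mk _ (X 1)} := by
  have hx : X 0 ^ (n - 2) ∈ xyIdeal k r {(n - 2, 0), (0, 1)} :=
    Ideal.subset_span (Or.inl ⟨(n - 2, 0), by simp, by simp⟩)
  have hy : X 1 ∈ xyIdeal k r {(n - 2, 0), (0, 1)} :=
    Ideal.subset_span (Or.inl ⟨(0, 1), by simp, by simp⟩)
  rw [gradedPiece_eq_span (exists_sub_algebraMap_mem_maxIdeal k r)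
    (xyIdeal_sub_two_mul_maxIdeal_le hn)
    (Set.insert_subset_iff.mpr ⟨hx, Set.singleton_subset_iff.mpr hy⟩), Set.image_pair]
  simp only [xyIdeal_le_iff, Finset.mem_insert, Finset.mem_singleton, forall_eq_or_imp, forall_eq]
  refine ⟨⟨Submodule.mem_sup_right (Ideal.subset_span (by simp)),
    Submodule.mem_sup_right (Ideal.subset_span (by simp))⟩,
    fun i => Submodule.mem_sup_left (X_succ_succ_mem_xyIdeal _ i)⟩

theorem finrank_gradedPiece_xyIdeal_sub_two {n : ℕ} (hn : 3 ≤ n) :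
    Module.finrank k (gradedPiece k (xyIdeal k r {(n - 2, 0), (0, 1)})
      (xyIdeal k r {(n - 1, 0), (1, 1), (0, 2)})) = 2 := by
  rw [gradedPiece_xyIdeal_sub_two hn]
  refine finrank_span_pair (linearIndependent_mk_pair (coeff (xyExp (n - 2) 0))
    (coeff (xyExp 0 1)) (fun f hf => ⟨mem_xyIdeal_iff.mp hf _ _ ?_, mem_xyIdeal_iff.mp hf _ _ ?_⟩)
    ?_ ?_)
  all_goals simp [X_zero_pow, X_one_eq_monomial, coeff_xyExp_monomial]
  all_goals omega

theorem gradedPiece_xyIdeal_sub_one {n : ℕ} (hn : 2 ≤ n) :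
    gradedPiece k (xyIdeal k r {(n - 1, 0), (1, 1), (0, 2)})
        (xyIdeal k r {(n, 0), (1, 1), (0, 3)}) =
      Submodule.span k {Ideal.Quotient.mk _ (X 0 ^ (n - 1)), Ideal.Quotient.mk _ (X 1 ^ 2)} := by
  have hx : X 0 ^ (n - 1) ∈ xyIdeal k r {(n - 1, 0), (1, 1), (0, 2)} :=
    Ideal.subset_span (Or.inl ⟨(n - 1, 0), by simp, by simp⟩)
  have hy : X 1 ^ 2 ∈ xyIdeal k r {(n - 1, 0), (1, 1), (0, 2)} :=
    Ideal.subset_span (Or.inl ⟨(0, 2), by simp, by simp⟩)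
  rw [gradedPiece_eq_span (exists_sub_algebraMap_mem_maxIdeal k r)
    (xyIdeal_sub_one_mul_maxIdeal_le hn)
    (Set.insert_subset_iff.mpr ⟨hx, Set.singleton_subset_iff.mpr hy⟩), Set.image_pair]
  simp only [xyIdeal_le_iff, Finset.mem_insert, Finset.mem_singleton, forall_eq_or_imp, forall_eq]
  refine ⟨⟨Submodule.mem_sup_right (Ideal.subset_span (by simp)),
    Submodule.mem_sup_left (Ideal.subset_span (Or.inl ⟨(1, 1), by simp, by simp⟩)),
    Submodule.mem_sup_right (Ideal.subset_span (by simp))⟩,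
    fun i => Submodule.mem_sup_left (X_succ_succ_mem_xyIdeal _ i)⟩

theorem finrank_gradedPiece_xyIdeal_sub_one {n : ℕ} (hn : 2 ≤ n) :
    Module.finrank k (gradedPiece k (xyIdeal k r {(n - 1, 0), (1, 1), (0, 2)})
      (xyIdeal k r {(n, 0), (1, 1), (0, 3)})) = 2 := by
  rw [gradedPiece_xyIdeal_sub_one hn]
  refine finrank_span_pair (linearIndependent_mk_pair (coeff (xyExp (n - 1) 0))
    (coeff (xyExp 0 2)) (fun f hf => ⟨mem_xyIdeal_iff.mp hf _ _ ?_, mem_xyIdeal_iff.mp hf _ _ ?_⟩)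
    ?_ ?_)
  all_goals simp [X_zero_pow, X_one_pow, coeff_xyExp_monomial]
  all_goals omega

theorem gradedPiece_cuspIdeal {n : ℕ} (hn : n ≠ 0) :
    gradedPiece k (xyIdeal k r {(n, 0), (1, 1), (0, 3)}) (cuspIdeal k r n) =
      Submodule.span k {Ideal.Quotient.mk _ (X 0 ^ n)} := by
  have hx : X 0 ^ n ∈ xyIdeal k r {(n, 0), (1, 1), (0, 3)} :=
    Ideal.subset_span (Or.inl ⟨(n, 0), by simp, by simp⟩)
  rw [gradedPiece_eq_span (exists_sub_algebraMap_mem_maxIdeal k r)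
    (xyIdeal_mul_maxIdeal_le_cuspIdeal hn)
    (Set.singleton_subset_iff.mpr hx), Set.image_singleton]
  simp only [xyIdeal_le_iff, Finset.mem_insert, Finset.mem_singleton, forall_eq_or_imp, forall_eq]
  have hxn : (X 0 ^ n : MvPowerSeries (Fin (r + 2)) k) ∈ cuspIdeal k r n ⊔ Ideal.span {X 0 ^ n} :=
    Submodule.mem_sup_right (Ideal.mem_span_singleton_self _)
  refine ⟨⟨by simpa using hxn, Submodule.mem_sup_left (Ideal.subset_span (by simp)), ?_⟩,
    fun i => Submodule.mem_sup_left (Ideal.subset_span (Or.inr ⟨i, rfl⟩))⟩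
  rw [show (X 0 ^ 0 * X 1 ^ 3 : MvPowerSeries (Fin (r + 2)) k) = (X 1 ^ 3 + X 0 ^ n) - X 0 ^ n by
    ring]
  exact sub_mem (Submodule.mem_sup_left (Ideal.subset_span (by simp))) hxn

theorem finrank_gradedPiece_cuspIdeal {n : ℕ} (hn : n ≠ 0) :
    Module.finrank k
      (gradedPiece k (xyIdeal k r {(n, 0), (1, 1), (0, 3)}) (cuspIdeal k r n)) = 1 := by
  rw [gradedPiece_cuspIdeal hn, finrank_span_singleton]
  rw [Ne, Ideal.Quotient.eq_zero_iff_mem]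
  intro h
  simpa [X_zero_pow, coeff_xyExp_monomial] using (coeff_of_mem_cuspIdeal hn h).2.2

end Graded

end CuspidalModel

open CuspidalModel MvPowerSeries in
/-- The filtration `I_ℓ = J : I^{n+1−ℓ}` (with `I_{n+1} = J`) of the local model of a
`C_{3,n}` cuspidal structure satisfies `I·I_ℓ ⊆ I_{ℓ+1}`, and the graded pieces
`I_ℓ/I_{ℓ+1}` are `k`-vector spaces of dimensions `1, …, 1, 2, 2, 1`, with the stated
generators. -/
theorem stmt_15 (k : Type) [Field k] (n r : ℕ) (hn : 4 ≤ n)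
    (x y : MvPowerSeries (Fin (r + 2)) k) (z : Fin r → MvPowerSeries (Fin (r + 2)) k)
    (hx : x = MvPowerSeries.X 0) (hy : y = MvPowerSeries.X 1)
    (hz : ∀ i : Fin r, z i = MvPowerSeries.X i.succ.succ)
    (I J : Ideal (MvPowerSeries (Fin (r + 2)) k))
    (hI : I = Ideal.span ({x, y} ∪ Set.range z))
    (hJ : J = Ideal.span ({y ^ 3 + x ^ n, x * y} ∪ Set.range z))
    (Iseq : ℕ → Ideal (MvPowerSeries (Fin (r + 2)) k))
    (hIseq : ∀ ℓ : ℕ, 1 ≤ ℓ → ℓ ≤ n → Iseq ℓ = Submodule.colon J ((I ^ (n + 1 - ℓ) : Ideal (MvPowerSeries (Fin (r + 2)) k)) : Set (MvPowerSeries (Fin (r + 2)) k)))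
    (hItop : Iseq (n + 1) = J) :
    (∀ ℓ : ℕ, 1 ≤ ℓ → ℓ ≤ n → I * Iseq ℓ ≤ Iseq (ℓ + 1)) ∧
    (∀ ℓ : ℕ, 1 ≤ ℓ → ℓ ≤ n - 3 →
      gradedPiece k (Iseq ℓ) (Iseq (ℓ + 1)) =
        Submodule.span k {Ideal.Quotient.mk (Iseq (ℓ + 1)) (x ^ ℓ)} ∧
      Module.finrank k (gradedPiece k (Iseq ℓ) (Iseq (ℓ + 1))) = 1) ∧
    (gradedPiece k (Iseq (n - 2)) (Iseq (n - 1)) =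
        Submodule.span k {Ideal.Quotient.mk (Iseq (n - 1)) (x ^ (n - 2)),
          Ideal.Quotient.mk (Iseq (n - 1)) y} ∧
      Module.finrank k (gradedPiece k (Iseq (n - 2)) (Iseq (n - 1))) = 2) ∧
    (gradedPiece k (Iseq (n - 1)) (Iseq n) =
        Submodule.span k {Ideal.Quotient.mk (Iseq n) (x ^ (n - 1)),
          Ideal.Quotient.mk (Iseq n) (y ^ 2)} ∧
      Module.finrank k (gradedPiece k (Iseq (n - 1)) (Iseq n)) = 2) ∧
    Module.finrank k (gradedPiece k (Iseq n) (Iseq (n + 1))) = 1 := by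
  subst hx hy
  obtain rfl : z = fun i => X i.succ.succ := funext hz
  obtain rfl : I = xyIdeal k r {(1, 0), (0, 1)} := hI.trans maxIdeal_eq_span.symm
  obtain rfl : J = cuspIdeal k r n := hJ
  have hcolon (ℓ : ℕ) (h1 : 1 ≤ ℓ) (h2 : ℓ ≤ n + 1) :
      Iseq ℓ = (cuspIdeal k r n).colon ↑(xyIdeal k r {(1, 0), (0, 1)} ^ (n + 1 - ℓ)) := by
    rcases h2.lt_or_eq with h2 | rfl
    · exact hIseq ℓ h1 (by omega)
    · rw [hItop, Nat.sub_self, Ideal.colon_pow_zero]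
  have hlow (ℓ : ℕ) (h1 : 1 ≤ ℓ) (h2 : ℓ ≤ n - 2) : Iseq ℓ = xyIdeal k r {(ℓ, 0), (0, 1)} :=
    (hcolon ℓ h1 (by omega)).trans (colon_cuspIdeal_pow_eq (by omega) h2)
  have hsubone : Iseq (n - 1) = xyIdeal k r {(n - 1, 0), (1, 1), (0, 2)} := by
    rw [hcolon (n - 1) (by omega) (by omega), show n + 1 - (n - 1) = 2 by omega,
      colon_cuspIdeal_sq_eq (by omega)]
  have htop : Iseq n = xyIdeal k r {(n, 0), (1, 1), (0, 3)} := by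
    rw [hcolon n (by omega) (by omega), show n + 1 - n = 1 by omega, pow_one,
      colon_cuspIdeal_eq (by omega)]
  refine ⟨fun ℓ h1 h2 => ?_, fun ℓ h1 h2 => ?_, ?_, ?_, ?_⟩
  · rw [hcolon ℓ h1 (by omega), hcolon (ℓ + 1) (by omega) (by omega),
      show n + 1 - ℓ = n + 1 - (ℓ + 1) + 1 by omega]
    exact Ideal.mul_colon_pow_succ_le _
  · rw [hlow ℓ h1 (by omega), hlow (ℓ + 1) (by omega) (by omega)]
    exact ⟨gradedPiece_xyIdeal_succ ℓ, finrank_gradedPiece_xyIdeal_succ ℓ⟩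
  · rw [hlow (n - 2) (by omega) le_rfl, hsubone]
    exact ⟨gradedPiece_xyIdeal_sub_two (by omega), finrank_gradedPiece_xyIdeal_sub_two (by omega)⟩
  · rw [hsubone, htop]
    exact ⟨gradedPiece_xyIdeal_sub_one (by omega), finrank_gradedPiece_xyIdeal_sub_one (by omega)⟩
  · rw [htop, hItop]
    exact finrank_gradedPiece_cuspIdeal (by omega)
end

section
/- One has I₂·J₂ ⊆ I² ∩ J₃; the quotient (I² ∩ J₃)/(I·J₂) is a 1-dimensional k-vector space generated by the class of xy; the quotient (I·I₂)/(I² ∩ J₃) is a 1-dimensional k-vector space generated by the class of y²; moreover I₃ ∩ J₂ = (x³, xy, y², z₁, …, z_r), the quotient (I₃ ∩ J₂)/J₃ is a 1-dimensional k-vector space generated by the class of y², and J₂ + I₃ = I₂. (These are the local forms of the identifications K² ≅ II₂/(I²∩J₃) ≅ (I₃∩J₂)/J₃ and of the exact sequences 0 → L⊗K → S²E → F → 0 and 0 → K² → F → L² → 0 in the degree-2 analysis of C_{3,n} structures.) -/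
set_option maxHeartbeats 1000000

/-!
Two facts about `R = k[[x, y, z]]` drive everything. First, `R = k ⊕ I`, so whenever
`I·t ⊆ B`, every element of `B + (t)` is `b + c t` with `b ∈ B` and `c ∈ k`: hence `(B + (t))/B`
is spanned by the class of `t`, and `A ∩ (B + (t)) = B` as soon as `B ⊆ A` and `t ∉ A`. Since
`I² ⊆ I·I₂ + (x²)`, `I·I₂ ⊆ I·J₂ + (xy, y²)` and `J₂ = (x³, xy, y², z) + (x²)`, all identities
follow by stripping off one monomial at a time. Second, the non-memberships `xy ∉ I·J₂`,
`y² ∉ J₃` and `x² ∉ I₃` used along the way are detected by weighted orders: for instance, with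
weights `(2, 1, 3)` on `(x, y, z)` every generator of `J₃` has weight at least `3`, while `y²` has
weight `2`.
-/

open Ideal Set

theorem Ideal.span_mul_span_le_iff {R : Type*} [CommSemiring R] {S T : Set R} {K : Ideal R} :
    span S * span T ≤ K ↔ ∀ a ∈ S, ∀ b ∈ T, a * b ∈ K := by
  rw [span_mul_span', span_le, Set.mul_subset_iff]
  rfl

section AugmentedAlgebra

variable {k R : Type} [Field k] [CommRing R] [Algebra k R] {𝔪 A B : Ideal R} {t : R}

theorem exists_sub_smul_mem_of_mem_sup_span_singleton
    (h𝔪 : ∀ g : R, ∃ c : k, g - algebraMap k R c ∈ 𝔪) (ht : 𝔪 * span {t} ≤ B) {f : R}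
    (hf : f ∈ B ⊔ span {t}) : ∃ c : k, f - c • t ∈ B := by
  obtain ⟨b, hb, s, hs, rfl⟩ := Submodule.mem_sup.1 hf
  obtain ⟨g, rfl⟩ := mem_span_singleton'.1 hs
  obtain ⟨c, hc⟩ := h𝔪 g
  refine ⟨c, ?_⟩
  rw [show b + g * t - c • t = b + (g - algebraMap k R c) * t by rw [Algebra.smul_def]; ring]
  exact B.add_mem hb (ht (mul_mem_mul hc (mem_span_singleton_self t)))

theorem inf_sup_span_singleton_le
    (h𝔪 : ∀ g : R, ∃ c : k, g - algebraMap k R c ∈ 𝔪) (ht : 𝔪 * span {t} ≤ B)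
    (hBA : B ≤ A) (htA : t ∉ A) : A ⊓ (B ⊔ span {t}) ≤ B := by
  rintro f ⟨hfA, hf⟩
  obtain ⟨c, hc⟩ := exists_sub_smul_mem_of_mem_sup_span_singleton h𝔪 ht hf
  obtain rfl | hc0 := eq_or_ne c 0
  · simpa using hc
  · refine absurd ?_ htA
    have hct : c • t ∈ A := by simpa using A.sub_mem hfA (hBA hc)
    simpa [smul_smul, inv_mul_cancel₀ hc0] using A.smul_of_tower_mem c⁻¹ hct

theorem gradedPiece_eq_span_singleton
    (h𝔪 : ∀ g : R, ∃ c : k, g - algebraMap k R c ∈ 𝔪) (ht : 𝔪 * span {t} ≤ B)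
    (hA : A = B ⊔ span {t}) :
    gradedPiece k A B = Submodule.span k {Ideal.Quotient.mk B t} := by
  apply le_antisymm
  · intro ξ hξ
    obtain ⟨f, hf, rfl⟩ := (mem_map_iff_of_surjective _ Quotient.mk_surjective).1 hξ
    obtain ⟨c, hc⟩ := exists_sub_smul_mem_of_mem_sup_span_singleton h𝔪 ht (hA ▸ hf)
    rw [← sub_add_cancel f (c • t), map_add, Quotient.eq_zero_iff_mem.2 hc, zero_add,
      Algebra.smul_def, map_mul, Quotient.mk_algebraMap, ← Algebra.smul_def]
    exact Submodule.smul_mem _ c (Submodule.mem_span_singleton_self _)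
  · rw [Submodule.span_le, singleton_subset_iff]
    exact mem_map_of_mem _ (hA ▸ Submodule.mem_sup_right (mem_span_singleton_self t))

theorem finrank_gradedPiece_eq_one
    (h𝔪 : ∀ g : R, ∃ c : k, g - algebraMap k R c ∈ 𝔪) (ht : 𝔪 * span {t} ≤ B)
    (hA : A = B ⊔ span {t}) (htB : t ∉ B) : Module.finrank k (gradedPiece k A B) = 1 := by
  rw [gradedPiece_eq_span_singleton h𝔪 ht hA]
  exact finrank_span_singleton (mt Quotient.eq_zero_iff_mem.1 htB)

end AugmentedAlgebra

namespace MvPowerSeries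

variable {σ R : Type*}

theorem mem_span_image_X_of_coeff_eq_zero [CommRing R] [DecidableEq σ] (s : Finset σ)
    {f : MvPowerSeries σ R} (hf : ∀ d : σ →₀ ℕ, (∀ i ∈ s, d i = 0) → coeff d f = 0) :
    f ∈ span (X '' s) := by
  induction s using Finset.induction_on generalizing f with
  | empty =>
    obtain rfl : f = 0 := ext fun d => by simpa using hf d
    exact zero_mem _
  | insert a s _ ih =>
    -- split off the terms not divisible by `X a`
    let g : MvPowerSeries σ R := fun d => if d a = 0 then coeff d f else 0
    have hg : g ∈ span (X '' s) := ih fun d hd => by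
      change (if d a = 0 then coeff d f else 0) = 0
      split_ifs with hda
      · exact hf d (by simpa [hda] using hd)
      · rfl
    have hfg : X a ∣ f - g := X_dvd_iff.2 fun d hda => by
      change coeff d f - (if d a = 0 then coeff d f else 0) = 0
      simp [hda]
    rw [← sub_add_cancel f g, Finset.coe_insert, image_insert_eq, span_insert]
    exact add_mem (mem_sup_left (mem_span_singleton.2 hfg)) (mem_sup_right hg)

theorem sub_C_constantCoeff_mem_span_range_X [CommRing R] [Finite σ] (f : MvPowerSeries σ R) :
    f - C (constantCoeff f) ∈ span (range X) := by
  classical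
  have := Fintype.ofFinite σ
  rw [← image_univ, ← Finset.coe_univ]
  refine mem_span_image_X_of_coeff_eq_zero _ fun d hd => ?_
  obtain rfl : d = 0 := Finsupp.ext fun i => hd i (Finset.mem_univ i)
  simp

section WeightedOrderIdeal

variable [CommSemiring R] (w : σ → ℕ)

def weightedOrderIdeal (n : ℕ∞) : Ideal (MvPowerSeries σ R) where
  carrier := {f | n ≤ f.weightedOrder w}
  add_mem' hf hg := le_trans (le_min hf hg) (min_weightedOrder_le_add w)
  zero_mem' := by simp
  smul_mem' c f hf := le_trans (le_add_left hf) (le_weightedOrder_mul w)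

variable {w}

theorem mem_weightedOrderIdeal {n : ℕ∞} {f : MvPowerSeries σ R} :
    f ∈ weightedOrderIdeal w n ↔ n ≤ f.weightedOrder w := Iff.rfl

theorem mul_mem_weightedOrderIdeal {m n : ℕ∞} {f g : MvPowerSeries σ R}
    (hf : f ∈ weightedOrderIdeal w m) (hg : g ∈ weightedOrderIdeal w n) :
    f * g ∈ weightedOrderIdeal w (m + n) :=
  le_trans (add_le_add hf hg) (le_weightedOrder_mul w)

variable [Nontrivial R]

@[simp]
theorem weightedOrder_X_pow (i : σ) (p : ℕ) :
    (X i ^ p : MvPowerSeries σ R).weightedOrder w = p * w i := by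
  rw [X_pow_eq, weightedOrder_monomial_of_ne_zero w one_ne_zero, Finsupp.weight_single,
    smul_eq_mul, Nat.cast_mul]

@[simp]
theorem weightedOrder_X (i : σ) : (X i : MvPowerSeries σ R).weightedOrder w = w i := by
  simpa using weightedOrder_X_pow (R := R) (w := w) i 1

@[simp]
theorem weightedOrder_X_mul_X (i j : σ) :
    (X i * X j : MvPowerSeries σ R).weightedOrder w = w i + w j := by
  rw [X_def, X_def, monomial_mul_monomial, weightedOrder_monomial_of_ne_zero w (by simp),
    map_add, Finsupp.weight_single, Finsupp.weight_single]
  simp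

end WeightedOrderIdeal

end MvPowerSeries

namespace CuspModel

section Ideals

variable {R : Type*} [CommRing R] {ι : Type*} (x y : R) (z : ι → R)

def I : Ideal R := span ({x, y} ∪ range z)
def I₂ : Ideal R := span ({x ^ 2, y} ∪ range z)
def I₃ : Ideal R := span ({x ^ 3, y} ∪ range z)
def J₂ : Ideal R := span ({x ^ 2, x * y, y ^ 2} ∪ range z)
def J₃ : Ideal R := span ({x ^ 3, x * y, y ^ 3} ∪ range z)
def K : Ideal R := span ({x ^ 3, x * y, y ^ 2} ∪ range z)

theorem I₂_le_I : I₂ x y z ≤ I x y z := by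
  simp only [I₂, span_le, union_subset_iff, insert_subset_iff, singleton_subset_iff,
    range_subset_iff, SetLike.mem_coe]
  exact ⟨⟨pow_mem_of_mem _ (subset_span (by simp)) 2 two_pos, subset_span (by simp)⟩,
    fun i => subset_span (by simp)⟩

theorem J₂_le_I : J₂ x y z ≤ I x y z := by
  have hx : x ∈ I x y z := subset_span (by simp)
  have hy : y ∈ I x y z := subset_span (by simp)
  simp only [J₂, span_le, union_subset_iff, insert_subset_iff, singleton_subset_iff,
    range_subset_iff, SetLike.mem_coe]
  exact ⟨⟨pow_mem_of_mem _ hx 2 two_pos, mul_mem_left _ x hy, pow_mem_of_mem _ hy 2 two_pos⟩,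
    fun i => subset_span (by simp)⟩

theorem J₂_le_I₂ : J₂ x y z ≤ I₂ x y z := by
  have hy : y ∈ I₂ x y z := subset_span (by simp)
  simp only [J₂, span_le, union_subset_iff, insert_subset_iff, singleton_subset_iff,
    range_subset_iff, SetLike.mem_coe]
  exact ⟨⟨subset_span (by simp), mul_mem_left _ x hy, pow_mem_of_mem _ hy 2 two_pos⟩,
    fun i => subset_span (by simp)⟩

theorem I₃_le_I₂ : I₃ x y z ≤ I₂ x y z := by
  have hx2 : x ^ 2 ∈ I₂ x y z := subset_span (by simp)
  simp only [I₃, span_le, union_subset_iff, insert_subset_iff, singleton_subset_iff,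
    range_subset_iff, SetLike.mem_coe]
  exact ⟨⟨mem_of_dvd _ (Dvd.intro x (by ring)) hx2, subset_span (by simp)⟩,
    fun i => subset_span (by simp)⟩

theorem J₂_add_I₃ : J₂ x y z + I₃ x y z = I₂ x y z := by
  refine le_antisymm (sup_le (J₂_le_I₂ x y z) (I₃_le_I₂ x y z)) ?_
  simp only [I₂, span_le, union_subset_iff, insert_subset_iff, singleton_subset_iff,
    range_subset_iff, SetLike.mem_coe]
  exact ⟨⟨mem_sup_left (subset_span (by simp)), mem_sup_right (subset_span (by simp))⟩,
    fun i => mem_sup_left (subset_span (by simp))⟩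

theorem K_le_I₃ : K x y z ≤ I₃ x y z := by
  have hy : y ∈ I₃ x y z := subset_span (by simp)
  simp only [K, span_le, union_subset_iff, insert_subset_iff, singleton_subset_iff,
    range_subset_iff, SetLike.mem_coe]
  exact ⟨⟨subset_span (by simp), mul_mem_left _ x hy, pow_mem_of_mem _ hy 2 two_pos⟩,
    fun i => subset_span (by simp)⟩

theorem K_eq_J₃_sup : K x y z = J₃ x y z ⊔ span {y ^ 2} := by
  have hy2 : y ^ 2 ∈ K x y z := subset_span (by simp)
  apply le_antisymm
  · simp only [K, span_le, union_subset_iff, insert_subset_iff, singleton_subset_iff,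
      range_subset_iff, SetLike.mem_coe]
    exact ⟨⟨mem_sup_left (subset_span (by simp)), mem_sup_left (subset_span (by simp)),
      mem_sup_right (mem_span_singleton_self _)⟩, fun i => mem_sup_left (subset_span (by simp))⟩
  · refine sup_le ?_ ((span_singleton_le_iff_mem _).2 hy2)
    simp only [J₃, span_le, union_subset_iff, insert_subset_iff, singleton_subset_iff,
      range_subset_iff, SetLike.mem_coe]
    exact ⟨⟨subset_span (by simp), subset_span (by simp),
      mem_of_dvd _ (Dvd.intro y (by ring)) hy2⟩, fun i => subset_span (by simp)⟩

theorem J₂_eq_K_sup : J₂ x y z = K x y z ⊔ span {x ^ 2} := by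
  have hx2 : x ^ 2 ∈ J₂ x y z := subset_span (by simp)
  apply le_antisymm
  · simp only [J₂, span_le, union_subset_iff, insert_subset_iff, singleton_subset_iff,
      range_subset_iff, SetLike.mem_coe]
    exact ⟨⟨mem_sup_right (mem_span_singleton_self _), mem_sup_left (subset_span (by simp)),
      mem_sup_left (subset_span (by simp))⟩, fun i => mem_sup_left (subset_span (by simp))⟩
  · refine sup_le ?_ ((span_singleton_le_iff_mem _).2 hx2)
    simp only [K, span_le, union_subset_iff, insert_subset_iff, singleton_subset_iff,
      range_subset_iff, SetLike.mem_coe]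
    exact ⟨⟨mem_of_dvd _ (Dvd.intro x (by ring)) hx2, subset_span (by simp),
      subset_span (by simp)⟩, fun i => subset_span (by simp)⟩

theorem I_mul_J₂_le_J₃ : I x y z * J₂ x y z ≤ J₃ x y z := by
  have hx3 : x ^ 3 ∈ J₃ x y z := subset_span (by simp)
  have hxy : x * y ∈ J₃ x y z := subset_span (by simp)
  have hy3 : y ^ 3 ∈ J₃ x y z := subset_span (by simp)
  have hz : ∀ i, z i ∈ J₃ x y z := fun i => subset_span (by simp)
  refine span_mul_span_le_iff.2 ?_
  simp only [mem_union, mem_insert_iff, mem_singleton_iff, mem_range, or_imp, forall_and,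
    forall_eq, forall_exists_index, forall_apply_eq_imp_iff]
  and_intros
  all_goals try (intros; first | exact mul_mem_left _ _ (hz _) | exact mul_mem_right _ _ (hz _))
  all_goals try exact mul_mem_left _ _ hxy
  · exact mem_of_dvd _ (Dvd.intro 1 (by ring)) hx3
  · exact mem_of_dvd _ (Dvd.intro x (by ring)) hxy
  · exact mem_of_dvd _ (Dvd.intro y (by ring)) hxy
  · exact mem_of_dvd _ (Dvd.intro 1 (by ring)) hy3

theorem I₂_mul_J₂_le : I₂ x y z * J₂ x y z ≤ I x y z ^ 2 ⊓ J₃ x y z :=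
  le_inf (pow_two (I x y z) ▸ mul_mono (I₂_le_I x y z) (J₂_le_I x y z))
    ((mul_mono_left (I₂_le_I x y z)).trans (I_mul_J₂_le_J₃ x y z))

theorem sq_le : I x y z ^ 2 ≤ I x y z * I₂ x y z ⊔ span {x ^ 2} := by
  have hI₂ : ∀ a ∈ I x y z, ∀ b ∈ I₂ x y z, a * b ∈ I x y z * I₂ x y z ⊔ span {x ^ 2} :=
    fun a ha b hb => mem_sup_left (mul_mem_mul ha hb)
  have hx : x ∈ I x y z := subset_span (by simp)
  have hy : y ∈ I x y z := subset_span (by simp)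
  have hz : ∀ i, z i ∈ I x y z := fun i => subset_span (by simp)
  have hy₂ : y ∈ I₂ x y z := subset_span (by simp)
  have hz₂ : ∀ i, z i ∈ I₂ x y z := fun i => subset_span (by simp)
  rw [pow_two]
  refine span_mul_span_le_iff.2 ?_
  simp only [mem_union, mem_insert_iff, mem_singleton_iff, mem_range, or_imp, forall_and,
    forall_eq, forall_exists_index, forall_apply_eq_imp_iff]
  and_intros
  · exact mem_sup_right (sq x ▸ mem_span_singleton_self _)
  · exact mul_comm x y ▸ hI₂ _ hx _ hy₂
  · exact fun i => mul_comm x (z i) ▸ hI₂ _ hx _ (hz₂ i)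
  · exact hI₂ _ hx _ hy₂
  · exact hI₂ _ hy _ hy₂
  · exact fun i => hI₂ _ (hz i) _ hy₂
  · exact fun i => hI₂ _ hx _ (hz₂ i)
  · exact fun i => hI₂ _ hy _ (hz₂ i)
  · exact fun i j => hI₂ _ (hz i) _ (hz₂ j)

theorem I_mul_I₂_le :
    I x y z * I₂ x y z ≤ I x y z * J₂ x y z ⊔ span {x * y} ⊔ span {y ^ 2} := by
  have hJ₂ : ∀ a ∈ I x y z, ∀ b ∈ J₂ x y z,
      a * b ∈ I x y z * J₂ x y z ⊔ span {x * y} ⊔ span {y ^ 2} :=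
    fun a ha b hb => mem_sup_left (mem_sup_left (mul_mem_mul ha hb))
  have hx : x ∈ I x y z := subset_span (by simp)
  have hy : y ∈ I x y z := subset_span (by simp)
  have hz : ∀ i, z i ∈ I x y z := fun i => subset_span (by simp)
  have hx2 : x ^ 2 ∈ J₂ x y z := subset_span (by simp)
  have hz₂ : ∀ i, z i ∈ J₂ x y z := fun i => subset_span (by simp)
  refine span_mul_span_le_iff.2 ?_
  simp only [mem_union, mem_insert_iff, mem_singleton_iff, mem_range, or_imp, forall_and,
    forall_eq, forall_exists_index, forall_apply_eq_imp_iff]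
  and_intros
  · exact hJ₂ _ hx _ hx2
  · exact hJ₂ _ hy _ hx2
  · exact fun i => hJ₂ _ (hz i) _ hx2
  · exact mem_sup_left (mem_sup_right (mem_span_singleton_self _))
  · exact mem_sup_right (sq y ▸ mem_span_singleton_self _)
  · exact fun i => mul_comm y (z i) ▸ hJ₂ _ hy _ (hz₂ i)
  · exact fun i => hJ₂ _ hx _ (hz₂ i)
  · exact fun i => hJ₂ _ hy _ (hz₂ i)
  · exact fun i j => hJ₂ _ (hz i) _ (hz₂ j)

end Ideals

section Augmented

variable {k R : Type} [Field k] [CommRing R] [Algebra k R] {ι : Type*} {x y : R} {z : ι → R}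

theorem I₃_inf_J₂_eq (hsplit : ∀ g : R, ∃ c : k, g - algebraMap k R c ∈ I x y z)
    (hx2 : x ^ 2 ∉ I₃ x y z) : I₃ x y z ⊓ J₂ x y z = K x y z := by
  have hK : K x y z ≤ I₃ x y z ⊓ J₂ x y z :=
    le_inf (K_le_I₃ x y z) ((J₂_eq_K_sup x y z).symm ▸ le_sup_left)
  refine le_antisymm ?_ hK
  have ht : I x y z * span {x ^ 2} ≤ K x y z :=
    calc I x y z * span {x ^ 2} ≤ I x y z * J₂ x y z :=
          mul_mono_right ((span_singleton_le_iff_mem _).2 (subset_span (by simp)))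
      _ ≤ J₃ x y z := I_mul_J₂_le_J₃ x y z
      _ ≤ K x y z := K_eq_J₃_sup x y z ▸ le_sup_left
  rw [J₂_eq_K_sup]
  exact inf_sup_span_singleton_le hsplit ht (K_le_I₃ x y z) hx2

theorem sq_inf_J₃_eq (hsplit : ∀ g : R, ∃ c : k, g - algebraMap k R c ∈ I x y z)
    (hx2 : x ^ 2 ∉ I₃ x y z) (hy2 : y ^ 2 ∉ J₃ x y z) :
    I x y z ^ 2 ⊓ J₃ x y z = I x y z * J₂ x y z ⊔ span {x * y} := by
  set B := I x y z * J₂ x y z ⊔ span {x * y}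
  have hB : B ≤ J₃ x y z :=
    sup_le (I_mul_J₂_le_J₃ x y z) ((span_singleton_le_iff_mem _).2 (subset_span (by simp)))
  have hIJ₂ : ∀ {t}, t ∈ J₂ x y z → I x y z * span {t} ≤ B := fun ht =>
    le_sup_of_le_left (mul_mono_right ((span_singleton_le_iff_mem _).2 ht))
  -- first discard the `x²`-component inside `K = J₃ + (y²)`, then the `y²`-component inside `J₃`
  have hK : K x y z ⊓ (B ⊔ span {y ^ 2} ⊔ span {x ^ 2}) ≤ B ⊔ span {y ^ 2} :=
    inf_sup_span_singleton_le hsplit (le_sup_of_le_left (hIJ₂ (subset_span (by simp))))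
      (K_eq_J₃_sup x y z ▸ sup_le_sup_right hB _) (fun h => hx2 (K_le_I₃ x y z h))
  have hJ₃ : J₃ x y z ⊓ (B ⊔ span {y ^ 2}) ≤ B :=
    inf_sup_span_singleton_le hsplit (hIJ₂ (subset_span (by simp))) hB hy2
  refine le_antisymm ?_ (le_inf ?_ hB)
  · calc I x y z ^ 2 ⊓ J₃ x y z
        ≤ J₃ x y z ⊓ (K x y z ⊓ (B ⊔ span {y ^ 2} ⊔ span {x ^ 2})) :=
          le_inf inf_le_right (le_inf (inf_le_right.trans (K_eq_J₃_sup x y z ▸ le_sup_left))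
            (inf_le_left.trans ((sq_le x y z).trans (sup_le_sup_right (I_mul_I₂_le x y z) _))))
      _ ≤ J₃ x y z ⊓ (B ⊔ span {y ^ 2}) := inf_le_inf_left _ hK
      _ ≤ B := hJ₃
  · rw [pow_two]
    exact sup_le (mul_mono_right (J₂_le_I x y z)) ((span_singleton_le_iff_mem _).2
      (mul_mem_mul (subset_span (by simp)) (subset_span (by simp))))

theorem I_mul_I₂_eq (hsplit : ∀ g : R, ∃ c : k, g - algebraMap k R c ∈ I x y z)
    (hx2 : x ^ 2 ∉ I₃ x y z) (hy2 : y ^ 2 ∉ J₃ x y z) :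
    I x y z * I₂ x y z = I x y z ^ 2 ⊓ J₃ x y z ⊔ span {y ^ 2} := by
  have hy : y ∈ I x y z := subset_span (by simp)
  have hy₂ : y ∈ I₂ x y z := subset_span (by simp)
  rw [sq_inf_J₃_eq hsplit hx2 hy2]
  refine le_antisymm (I_mul_I₂_le x y z) (sup_le (sup_le (mul_mono_right (J₂_le_I₂ x y z)) ?_) ?_)
  · exact (span_singleton_le_iff_mem _).2 (mul_mem_mul (subset_span (by simp)) hy₂)
  · exact (span_singleton_le_iff_mem _).2 (sq y ▸ mul_mem_mul hy hy₂)

theorem gradedPiece_sq_inf_J₃ (hsplit : ∀ g : R, ∃ c : k, g - algebraMap k R c ∈ I x y z)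
    (hx2 : x ^ 2 ∉ I₃ x y z) (hy2 : y ^ 2 ∉ J₃ x y z) (hxy : x * y ∉ I x y z * J₂ x y z) :
    gradedPiece k (I x y z ^ 2 ⊓ J₃ x y z) (I x y z * J₂ x y z) =
        Submodule.span k {Ideal.Quotient.mk (I x y z * J₂ x y z) (x * y)} ∧
      Module.finrank k (gradedPiece k (I x y z ^ 2 ⊓ J₃ x y z) (I x y z * J₂ x y z)) = 1 := by
  have ht : I x y z * span {x * y} ≤ I x y z * J₂ x y z :=
    mul_mono_right ((span_singleton_le_iff_mem _).2 (subset_span (by simp)))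
  have hA := sq_inf_J₃_eq hsplit hx2 hy2
  exact ⟨gradedPiece_eq_span_singleton hsplit ht hA, finrank_gradedPiece_eq_one hsplit ht hA hxy⟩

theorem gradedPiece_I_mul_I₂ (hsplit : ∀ g : R, ∃ c : k, g - algebraMap k R c ∈ I x y z)
    (hx2 : x ^ 2 ∉ I₃ x y z) (hy2 : y ^ 2 ∉ J₃ x y z) :
    gradedPiece k (I x y z * I₂ x y z) (I x y z ^ 2 ⊓ J₃ x y z) =
        Submodule.span k {Ideal.Quotient.mk (I x y z ^ 2 ⊓ J₃ x y z) (y ^ 2)} ∧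
      Module.finrank k (gradedPiece k (I x y z * I₂ x y z) (I x y z ^ 2 ⊓ J₃ x y z)) = 1 := by
  have ht : I x y z * span {y ^ 2} ≤ I x y z ^ 2 ⊓ J₃ x y z := by
    rw [sq_inf_J₃_eq hsplit hx2 hy2]
    exact le_sup_of_le_left
      (mul_mono_right ((span_singleton_le_iff_mem _).2 (subset_span (by simp))))
  have hA := I_mul_I₂_eq hsplit hx2 hy2
  exact ⟨gradedPiece_eq_span_singleton hsplit ht hA,
    finrank_gradedPiece_eq_one hsplit ht hA fun h => hy2 h.2⟩

theorem gradedPiece_I₃_inf_J₂ (hsplit : ∀ g : R, ∃ c : k, g - algebraMap k R c ∈ I x y z)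
    (hx2 : x ^ 2 ∉ I₃ x y z) (hy2 : y ^ 2 ∉ J₃ x y z) :
    gradedPiece k (I₃ x y z ⊓ J₂ x y z) (J₃ x y z) =
        Submodule.span k {Ideal.Quotient.mk (J₃ x y z) (y ^ 2)} ∧
      Module.finrank k (gradedPiece k (I₃ x y z ⊓ J₂ x y z) (J₃ x y z)) = 1 := by
  have ht : I x y z * span {y ^ 2} ≤ J₃ x y z :=
    (mul_mono_right ((span_singleton_le_iff_mem _).2 (subset_span (by simp)))).trans
      (I_mul_J₂_le_J₃ x y z)
  have hA := (I₃_inf_J₂_eq hsplit hx2).trans (K_eq_J₃_sup x y z)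
  exact ⟨gradedPiece_eq_span_singleton hsplit ht hA, finrank_gradedPiece_eq_one hsplit ht hA hy2⟩

end Augmented

section PowerSeries

open MvPowerSeries

variable {k : Type} [Field k] {r : ℕ} {x y : MvPowerSeries (Fin (r + 2)) k}
  {z : Fin r → MvPowerSeries (Fin (r + 2)) k}

theorem exists_sub_algebraMap_mem_I (hx : x = X 0) (hy : y = X 1)
    (hz : ∀ i, z i = X i.succ.succ) (g : MvPowerSeries (Fin (r + 2)) k) :
    ∃ c : k, g - algebraMap k _ c ∈ I x y z := by
  refine ⟨constantCoeff g, ?_⟩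
  rw [← c_eq_algebraMap]
  refine span_mono ?_ (sub_C_constantCoeff_mem_span_range_X g)
  rintro _ ⟨s, rfl⟩
  cases s using Fin.cases with
  | zero => simp [hx]
  | succ s =>
    cases s using Fin.cases with
    | zero => simp [hy]
    | succ i => exact Or.inr ⟨i, hz i⟩

theorem x_sq_notMem_I₃ (hx : x = X 0) (hy : y = X 1) (hz : ∀ i, z i = X i.succ.succ) :
    x ^ 2 ∉ I₃ x y z := by
  have hle : I₃ x y z ≤ weightedOrderIdeal (Fin.cons 1 (Fin.cons 3 fun _ => 3)) 3 := by
    simp only [I₃, span_le, union_subset_iff, insert_subset_iff, singleton_subset_iff,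
      range_subset_iff, SetLike.mem_coe, mem_weightedOrderIdeal, hx, hy, hz]
    norm_num
  intro h
  have := hle h
  norm_num [mem_weightedOrderIdeal, hx] at this

theorem y_sq_notMem_J₃ (hx : x = X 0) (hy : y = X 1) (hz : ∀ i, z i = X i.succ.succ) :
    y ^ 2 ∉ J₃ x y z := by
  have hle : J₃ x y z ≤ weightedOrderIdeal (Fin.cons 2 (Fin.cons 1 fun _ => 3)) 3 := by
    simp only [J₃, span_le, union_subset_iff, insert_subset_iff, singleton_subset_iff,
      range_subset_iff, SetLike.mem_coe, mem_weightedOrderIdeal, hx, hy, hz]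
    norm_num
  intro h
  have := hle h
  norm_num [mem_weightedOrderIdeal, hy] at this

theorem x_mul_y_notMem_I_mul_J₂ (hx : x = X 0) (hy : y = X 1)
    (hz : ∀ i, z i = X i.succ.succ) : x * y ∉ I x y z * J₂ x y z := by
  let w : Fin (r + 2) → ℕ := Fin.cons 1 (Fin.cons 1 fun _ => 3)
  have hI : I x y z ≤ weightedOrderIdeal w 1 := by
    simp only [I, span_le, union_subset_iff, insert_subset_iff, singleton_subset_iff,
      range_subset_iff, SetLike.mem_coe, mem_weightedOrderIdeal, hx, hy, hz]
    norm_num [w]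
  have hJ₂ : J₂ x y z ≤ weightedOrderIdeal w 2 := by
    simp only [J₂, span_le, union_subset_iff, insert_subset_iff, singleton_subset_iff,
      range_subset_iff, SetLike.mem_coe, mem_weightedOrderIdeal, hx, hy, hz]
    norm_num [w]
  intro h
  have := mul_le.2 (fun a ha b hb => mul_mem_weightedOrderIdeal (hI ha) (hJ₂ hb)) h
  norm_num [mem_weightedOrderIdeal, hx, hy, w] at this

end PowerSeries

end CuspModel

open CuspModel in
theorem stmt_18_general (k : Type) [Field k] (r : ℕ)
    (x y : MvPowerSeries (Fin (r + 2)) k) (z : Fin r → MvPowerSeries (Fin (r + 2)) k)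
    (hx : x = MvPowerSeries.X 0) (hy : y = MvPowerSeries.X 1)
    (hz : ∀ i : Fin r, z i = MvPowerSeries.X i.succ.succ)
    (I I₂ I₃ J₂ J₃ : Ideal (MvPowerSeries (Fin (r + 2)) k))
    (hI : I = Ideal.span ({x, y} ∪ Set.range z))
    (hI₂ : I₂ = Ideal.span ({x ^ 2, y} ∪ Set.range z))
    (hI₃ : I₃ = Ideal.span ({x ^ 3, y} ∪ Set.range z))
    (hJ₂ : J₂ = Ideal.span ({x ^ 2, x * y, y ^ 2} ∪ Set.range z))
    (hJ₃ : J₃ = Ideal.span ({x ^ 3, x * y, y ^ 3} ∪ Set.range z)) :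
    I₂ * J₂ ≤ I ^ 2 ⊓ J₃ ∧
    (gradedPiece k (I ^ 2 ⊓ J₃) (I * J₂) =
        Submodule.span k {Ideal.Quotient.mk (I * J₂) (x * y)} ∧
      Module.finrank k (gradedPiece k (I ^ 2 ⊓ J₃) (I * J₂)) = 1) ∧
    (gradedPiece k (I * I₂) (I ^ 2 ⊓ J₃) =
        Submodule.span k {Ideal.Quotient.mk (I ^ 2 ⊓ J₃) (y ^ 2)} ∧
      Module.finrank k (gradedPiece k (I * I₂) (I ^ 2 ⊓ J₃)) = 1) ∧
    I₃ ⊓ J₂ = Ideal.span ({x ^ 3, x * y, y ^ 2} ∪ Set.range z) ∧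
    (gradedPiece k (I₃ ⊓ J₂) J₃ =
        Submodule.span k {Ideal.Quotient.mk J₃ (y ^ 2)} ∧
      Module.finrank k (gradedPiece k (I₃ ⊓ J₂) J₃) = 1) ∧
    J₂ + I₃ = I₂ := by
  subst hI hI₂ hI₃ hJ₂ hJ₃
  have hsplit := exists_sub_algebraMap_mem_I hx hy hz
  have hx2 := x_sq_notMem_I₃ hx hy hz
  have hy2 := y_sq_notMem_J₃ hx hy hz
  have hxy := x_mul_y_notMem_I_mul_J₂ hx hy hz
  exact ⟨I₂_mul_J₂_le x y z, gradedPiece_sq_inf_J₃ hsplit hx2 hy2 hxy,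
    gradedPiece_I_mul_I₂ hsplit hx2 hy2, I₃_inf_J₂_eq hsplit hx2,
    gradedPiece_I₃_inf_J₂ hsplit hx2 hy2, J₂_add_I₃ x y z⟩

/-- Degree-2 identifications for the local model of a `C_{3,n}` cuspidal structure:
`I₂·J₂ ⊆ I² ∩ J₃`; `(I² ∩ J₃)/(I·J₂)` is 1-dimensional generated by `xy`;
`(I·I₂)/(I² ∩ J₃)` is 1-dimensional generated by `y²`;
`I₃ ∩ J₂ = (x³, xy, y², z)`; `(I₃ ∩ J₂)/J₃` is 1-dimensional generated by `y²`;
and `J₂ + I₃ = I₂`. -/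
theorem stmt_18 (k : Type) [Field k] (n r : ℕ) (hn : 4 ≤ n)
    (x y : MvPowerSeries (Fin (r + 2)) k) (z : Fin r → MvPowerSeries (Fin (r + 2)) k)
    (hx : x = MvPowerSeries.X 0) (hy : y = MvPowerSeries.X 1)
    (hz : ∀ i : Fin r, z i = MvPowerSeries.X i.succ.succ)
    (I J I₂ I₃ J₂ J₃ : Ideal (MvPowerSeries (Fin (r + 2)) k))
    (hI : I = Ideal.span ({x, y} ∪ Set.range z))
    (hJ : J = Ideal.span ({y ^ 3 + x ^ n, x * y} ∪ Set.range z))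
    (hI₂ : I₂ = Ideal.span ({x ^ 2, y} ∪ Set.range z))
    (hI₃ : I₃ = Ideal.span ({x ^ 3, y} ∪ Set.range z))
    (hJ₂ : J₂ = Ideal.span ({x ^ 2, x * y, y ^ 2} ∪ Set.range z))
    (hJ₃ : J₃ = Ideal.span ({x ^ 3, x * y, y ^ 3} ∪ Set.range z)) :
    I₂ * J₂ ≤ I ^ 2 ⊓ J₃ ∧
    (gradedPiece k (I ^ 2 ⊓ J₃) (I * J₂) =
        Submodule.span k {Ideal.Quotient.mk (I * J₂) (x * y)} ∧
      Module.finrank k (gradedPiece k (I ^ 2 ⊓ J₃) (I * J₂)) = 1) ∧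
    (gradedPiece k (I * I₂) (I ^ 2 ⊓ J₃) =
        Submodule.span k {Ideal.Quotient.mk (I ^ 2 ⊓ J₃) (y ^ 2)} ∧
      Module.finrank k (gradedPiece k (I * I₂) (I ^ 2 ⊓ J₃)) = 1) ∧
    I₃ ⊓ J₂ = Ideal.span ({x ^ 3, x * y, y ^ 2} ∪ Set.range z) ∧
    (gradedPiece k (I₃ ⊓ J₂) J₃ =
        Submodule.span k {Ideal.Quotient.mk J₃ (y ^ 2)} ∧
      Module.finrank k (gradedPiece k (I₃ ⊓ J₂) J₃) = 1) ∧
    J₂ + I₃ = I₂ :=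
  stmt_18_general k r x y z hx hy hz I I₂ I₃ J₂ J₃ hI hI₂ hI₃ hJ₂ hJ₃
end
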